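/- arXiv:2107.01250 — 7 statements merged into one kernel-verified Lean document; each statement's English description precedes it below -/
import Mathlib

section
/- Let $m = \Theta(n)$ balls be placed independently and uniformly at random into $n$ bins, and let $\mu = m/n$. For any $x > 1$ and $k \ge 1$, with probability $1 - 2^{-\Omega(k)}$, there is no $i \in [n]$ such that the first $i$ bins contain at least $(1 + 1/x) i \mu + kx$ balls. -/
open scoped Classical

/-- Number of balls (out of `m`) falling into the first `i` bins. -/
noncomputable def ballsInPrefix {m n : ℕ} (ω : Fin m → Fin n) (i : ℕ) : ℕ :=
  (Finset.univ.filter (fun b => (ω b : ℕ) < i)).card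

/-!
Change of measure. Give bin `j` the weight `1 + 1/(2x)` if `j < i₀ = ⌊n x/(x+1)⌋` and a
constant weight otherwise, normalised so that the weights sum to `n`; then `∏ b, w (ω b)` sums
to `n^m`. An overflow at `i` forces `i ≤ i₀`. Classify the overflowing `ω` by the first
overflowing prefix `i` together with the positions of the `s` balls inside it. Whether `i` is the
first overflow depends only on those balls, so each class is a cylinder of `(n - i)^(m - s)`
outcomes, on which the weight averages
`(1 + 1/(2x))^s ((n - i (1 + 1/(2x)))/(n - i))^(m - s) ≥ exp (k x/(2x+1))`
(by `log y ≥ 1 - 1/y`). Hence at most `exp (-k x/(2x+1)) n^m ≤ 2^(-k/3) n^m` outcomes overflow.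
-/

open Finset Real

theorem mul_card_le_sum_of_forall_fiber {α β : Type*} [DecidableEq β] (s : Finset α)
    (g : α → β) (W : α → ℝ) (L : ℝ)
    (h : ∀ a ∈ s, L * #{b ∈ s | g b = g a} ≤ ∑ b ∈ s with g b = g a, W b) :
    L * #s ≤ ∑ b ∈ s, W b := by
  rw [card_eq_sum_card_image g s, Nat.cast_sum, mul_sum,
    ← sum_fiberwise_of_maps_to (fun a ha => mem_image_of_mem g ha) W]
  refine sum_le_sum fun y hy => ?_
  obtain ⟨a, ha, rfl⟩ := mem_image.mp hy
  exact h a ha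

theorem Fin.card_filter_le_val (n i : ℕ) : #{j : Fin n | i ≤ (j : ℕ)} = n - i := by
  have h := card_filter_add_card_filter_not (s := (univ : Finset (Fin n))) (fun j => (j : ℕ) < i)
  simp only [Fin.card_filter_val_lt, not_lt, card_univ, Fintype.card_fin] at h
  omega

section PrefixProfile

variable {m n : ℕ}

def prefixProfile (i : ℕ) (ω : Fin m → Fin n) (b : Fin m) : Option (Fin n) :=
  if (ω b : ℕ) < i then some (ω b) else none

theorem prefixProfile_eq_of_le {i j : ℕ} {ω ω' : Fin m → Fin n} (hji : j ≤ i)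
    (h : prefixProfile i ω = prefixProfile i ω') : prefixProfile j ω = prefixProfile j ω' := by
  funext b
  have hb := congrFun h b
  simp only [prefixProfile] at hb ⊢
  split_ifs at hb ⊢ <;> simp_all <;> omega

theorem ballsInPrefix_eq_card_isSome (ω : Fin m → Fin n) (i : ℕ) :
    ballsInPrefix ω i = #{b | (prefixProfile i ω b).isSome} := by
  simp [ballsInPrefix, prefixProfile, apply_ite Option.isSome]

theorem ballsInPrefix_eq_of_prefixProfile_eq {i j : ℕ} {ω ω' : Fin m → Fin n} (hji : j ≤ i)
    (h : prefixProfile i ω = prefixProfile i ω') : ballsInPrefix ω j = ballsInPrefix ω' j := by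
  rw [ballsInPrefix_eq_card_isSome, ballsInPrefix_eq_card_isSome, prefixProfile_eq_of_le hji h]

theorem filter_prefixProfile_eq (i : ℕ) (ω₀ : Fin m → Fin n) :
    ({ω | prefixProfile i ω = prefixProfile i ω₀} : Finset (Fin m → Fin n)) =
      Fintype.piFinset fun b =>
        if (ω₀ b : ℕ) < i then {ω₀ b} else ({j | i ≤ (j : ℕ)} : Finset (Fin n)) := by
  ext ω
  simp only [mem_filter, mem_univ, true_and, Fintype.mem_piFinset, funext_iff, prefixProfile]
  refine forall_congr' fun b => ?_
  split_ifs <;> simp_all [Fin.ext_iff]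
  omega

theorem sum_prod_prefixCylinder {R : Type*} [CommSemiring R] {i : ℕ} {w : Fin n → R} {a : R}
    (hw : ∀ j : Fin n, (j : ℕ) < i → w j = a) (ω₀ : Fin m → Fin n) :
    ∑ ω with prefixProfile i ω = prefixProfile i ω₀, ∏ b, w (ω b) =
      a ^ ballsInPrefix ω₀ i *
        (∑ j ∈ {j : Fin n | i ≤ (j : ℕ)}, w j) ^ (m - ballsInPrefix ω₀ i) := by
  have hfactor : ∀ b,
      ∑ j ∈ (if (ω₀ b : ℕ) < i then {ω₀ b}
          else ({j | i ≤ (j : ℕ)} : Finset (Fin n))), w j =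
        if (ω₀ b : ℕ) < i then a else ∑ j ∈ {j : Fin n | i ≤ (j : ℕ)}, w j := by
    intro b
    split_ifs with hb
    · rw [sum_singleton, hw _ hb]
    · rfl
  have hcard : #{b | ¬(ω₀ b : ℕ) < i} = m - ballsInPrefix ω₀ i := by
    have h := card_filter_add_card_filter_not (s := (univ : Finset (Fin m)))
      (fun b => (ω₀ b : ℕ) < i)
    rw [card_univ, Fintype.card_fin] at h
    rw [ballsInPrefix]
    omega
  rw [filter_prefixProfile_eq, ← prod_univ_sum, prod_congr rfl fun b _ => hfactor b, prod_ite,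
    prod_const, prod_const, hcard, ballsInPrefix]

theorem card_prefixCylinder (i : ℕ) (ω₀ : Fin m → Fin n) :
    #{ω | prefixProfile i ω = prefixProfile i ω₀} = (n - i) ^ (m - ballsInPrefix ω₀ i) := by
  simpa [Fin.card_filter_le_val] using
    sum_prod_prefixCylinder (i := i) (w := fun _ : Fin n => (1 : ℕ)) (fun _ _ => rfl) ω₀

variable (P : ℕ → (Fin m → Fin n) → Prop)

-- `sInf ∅ = 0`, so this is meaningful only where `P i ω` holds for some `i`.
noncomputable def stoppedProfile (ω : Fin m → Fin n) : ℕ × (Fin m → Option (Fin n)) :=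
  (sInf {i | P i ω}, prefixProfile (sInf {i | P i ω}) ω)

variable {P}

theorem stoppedProfile_eq_iff
    (hP : ∀ i ω ω', prefixProfile i ω = prefixProfile i ω' → P i ω → P i ω')
    {ω₀ : Fin m → Fin n} (h₀ : ∃ i, P i ω₀) (ω : Fin m → Fin n) :
    ((∃ i, P i ω) ∧ stoppedProfile P ω = stoppedProfile P ω₀) ↔
      prefixProfile (sInf {i | P i ω₀}) ω = prefixProfile (sInf {i | P i ω₀}) ω₀ := by
  constructor
  · rintro ⟨-, h⟩
    obtain ⟨hτ, hprofile⟩ := Prod.ext_iff.mp h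
    dsimp only [stoppedProfile] at hτ hprofile
    rwa [hτ] at hprofile
  · intro h
    have hτ : P (sInf {i | P i ω₀}) ω := hP _ _ _ h.symm (Nat.sInf_mem h₀)
    have hle : sInf {i | P i ω} ≤ sInf {i | P i ω₀} := Nat.sInf_le hτ
    have hge : sInf {i | P i ω₀} ≤ sInf {i | P i ω} :=
      Nat.sInf_le <| hP _ _ _ (prefixProfile_eq_of_le hle h) <|
        Nat.sInf_mem (s := {i | P i ω}) ⟨_, hτ⟩
    have hτeq := le_antisymm hle hge
    exact ⟨⟨_, hτ⟩, Prod.ext hτeq (by dsimp only [stoppedProfile]; rw [hτeq, h])⟩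

theorem filter_stoppedProfile_eq
    (hP : ∀ i ω ω', prefixProfile i ω = prefixProfile i ω' → P i ω → P i ω')
    {ω₀ : Fin m → Fin n} (h₀ : ∃ i, P i ω₀) :
    {ω ∈ ({ω | ∃ i, P i ω} : Finset (Fin m → Fin n)) |
        stoppedProfile P ω = stoppedProfile P ω₀} =
      ({ω | prefixProfile (sInf {i | P i ω₀}) ω = prefixProfile (sInf {i | P i ω₀}) ω₀} :
        Finset (Fin m → Fin n)) := by
  ext ω
  simp only [mem_filter, mem_univ, true_and]
  exact stoppedProfile_eq_iff hP h₀ ω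

end PrefixProfile

section TiltWeight

variable {n : ℕ}

theorem sum_filter_le_eq_sub {R : Type*} [CommRing R] {i : ℕ} {w : Fin n → R} {a : R}
    (hw : ∀ j : Fin n, (j : ℕ) < i → w j = a) (hi : i ≤ n) :
    ∑ j ∈ {j : Fin n | i ≤ (j : ℕ)}, w j = ∑ j, w j - i * a := by
  have hlt : ∑ j ∈ {j : Fin n | (j : ℕ) < i}, w j = i * a := by
    rw [sum_congr rfl fun j hj => hw j (mem_filter.mp hj).2, sum_const, Fin.card_filter_val_lt,
      min_eq_right hi, nsmul_eq_mul]
  rw [← sum_filter_add_sum_filter_not univ fun j : Fin n => (j : ℕ) < i, hlt]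
  simp only [not_lt, add_sub_cancel_left]

noncomputable def tiltWeight (n i₀ : ℕ) (a : ℝ) (j : Fin n) : ℝ :=
  if (j : ℕ) < i₀ then a else (n - i₀ * a) / (n - i₀)

variable {i₀ : ℕ} {a : ℝ}

theorem tiltWeight_of_lt {j : Fin n} (hj : (j : ℕ) < i₀) : tiltWeight n i₀ a j = a :=
  if_pos hj

theorem tiltWeight_of_le {j : Fin n} (hj : i₀ ≤ (j : ℕ)) :
    tiltWeight n i₀ a j = (n - i₀ * a) / (n - i₀) := if_neg (not_lt.mpr hj)

theorem sum_tiltWeight (h : i₀ < n) : ∑ j, tiltWeight n i₀ a j = n := by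
  have htail :
      ∑ j ∈ {j : Fin n | i₀ ≤ (j : ℕ)}, tiltWeight n i₀ a j = n - i₀ * a := by
    rw [sum_congr rfl fun j hj => tiltWeight_of_le (mem_filter.mp hj).2, sum_const,
      Fin.card_filter_le_val, nsmul_eq_mul, Nat.cast_sub h.le]
    have : (n : ℝ) - i₀ ≠ 0 := sub_ne_zero.mpr (by exact_mod_cast h.ne')
    field_simp
  have := sum_filter_le_eq_sub (fun j => tiltWeight_of_lt (a := a) (j := j)) h.le
  linarith

theorem tiltWeight_nonneg (ha : 0 ≤ a) (h : i₀ * a ≤ n) (h' : i₀ < n) (j : Fin n) :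
    0 ≤ tiltWeight n i₀ a j := by
  unfold tiltWeight
  split_ifs
  · exact ha
  · exact div_nonneg (by linarith) (by linarith [show (i₀ : ℝ) < n by exact_mod_cast h'])

theorem sum_tiltWeight_filter_le {i : ℕ} (hi : i ≤ i₀) (h : i₀ < n) :
    ∑ j ∈ {j : Fin n | i ≤ (j : ℕ)}, tiltWeight n i₀ a j = n - i * a := by
  rw [sum_filter_le_eq_sub (fun j hj => tiltWeight_of_lt (hj.trans_le hi)) (hi.trans h.le),
    sum_tiltWeight h]

end TiltWeight

section Estimates

variable {x k : ℝ}

theorem lt_mul_div_of_threshold_le (hx : 0 < x) (hk : 0 < k) {N M I : ℝ} (hN : 0 < N)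
    (hM : 0 ≤ M) (h : (1 + 1 / x) * I * (M / N) + k * x ≤ M) : I < N * x / (x + 1) := by
  have hkx := mul_pos hk hx
  have hprefix : (1 + 1 / x) * I * (M / N) = I * (x + 1) * M / (x * N) := by
    field_simp
  rw [hprefix] at h
  rw [lt_div_iff₀ (by linarith)]
  by_contra! hc
  have : M ≤ I * (x + 1) * M / (x * N) := by
    rw [le_div_iff₀ (by positivity)]
    nlinarith [mul_le_mul_of_nonneg_right hc hM]
  linarith

theorem floor_mul_tilt_lt (hx : 0 < x) {n : ℕ} (hn : 0 < n) :
    (⌊n * x / (x + 1)⌋₊ : ℝ) * (1 + 1 / (2 * x)) < n := by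
  have hN : (0 : ℝ) < n := by exact_mod_cast hn
  calc (⌊n * x / (x + 1)⌋₊ : ℝ) * (1 + 1 / (2 * x))
      ≤ n * x / (x + 1) * (1 + 1 / (2 * x)) := by
        gcongr
        exact Nat.floor_le (by positivity)
    _ = n * (2 * x + 1) / (2 * x + 2) := by field_simp
    _ < n := by rw [div_lt_iff₀ (by positivity)]; nlinarith

theorem lt_of_mul_tilt_lt (hx : 0 < x) {i₀ n : ℕ} (h : (i₀ : ℝ) * (1 + 1 / (2 * x)) < n) :
    i₀ < n := by
  have : (i₀ : ℝ) ≤ i₀ * (1 + 1 / (2 * x)) :=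
    le_mul_of_one_le_right (Nat.cast_nonneg _) (by simp; positivity)
  exact_mod_cast this.trans_lt h

theorem le_log_tilt_ratio (hx : 0 < x) (hk : 0 ≤ k) {N I S Q : ℝ} (hI : 0 ≤ I)
    (hIN : I * (1 + 1 / (2 * x)) < N) (hS : 0 ≤ S) (hQ : 0 ≤ Q)
    (hT : (1 + 1 / x) * I * ((S + Q) / N) + k * x ≤ S) :
    k * x / (2 * x + 1) ≤
      S * log (1 + 1 / (2 * x)) + Q * log ((N - I * (1 + 1 / (2 * x))) / (N - I)) := by
  have hIa : I ≤ I * (1 + 1 / (2 * x)) := le_mul_of_one_le_right hI (by simp; positivity)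
  have hN : 0 < N := by linarith
  have hNI : 0 < N - I := by linarith
  have hD : 0 < 2 * x * N - (2 * x + 1) * I := by
    have : 2 * x * (N - I * (1 + 1 / (2 * x))) = 2 * x * N - (2 * x + 1) * I := by
      field_simp
    rw [← this]
    exact mul_pos (by positivity) (by linarith)
  have hlog_a : 1 / (2 * x + 1) ≤ log (1 + 1 / (2 * x)) := by
    convert one_sub_inv_le_log_of_pos (x := 1 + 1 / (2 * x)) (by positivity) using 1
    field_simp
    ring
  have hlog_b : -(I / (2 * x * N - (2 * x + 1) * I)) ≤
      log ((N - I * (1 + 1 / (2 * x))) / (N - I)) := by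
    convert one_sub_inv_le_log_of_pos (x := (N - I * (1 + 1 / (2 * x))) / (N - I))
      (div_pos (by linarith) hNI) using 1
    have hD' : 2 * x * N - I * (2 * x + 1) ≠ 0 := by linarith
    rw [inv_div]
    field_simp
    ring
  have hT' : 2 * (x + 1) * I * (S + Q) + 2 * k * x ^ 2 * N ≤ 2 * x * N * S := by
    have e : 2 * x * N * ((1 + 1 / x) * I * ((S + Q) / N) + k * x) =
        2 * (x + 1) * I * (S + Q) + 2 * k * x ^ 2 * N := by
      field_simp
    rw [← e]
    exact mul_le_mul_of_nonneg_left hT (by positivity)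
  -- the slack `I (S + Q) + k x (2x+1) I` is what is left after expanding `hT'`
  have hnum : 0 ≤ S * (2 * x * N - (2 * x + 1) * I) - Q * I * (2 * x + 1)
      - k * x * (2 * x * N - (2 * x + 1) * I) := by
    nlinarith [mul_nonneg hI (add_nonneg hS hQ), mul_nonneg (mul_nonneg hk hx.le) hI]
  calc k * x / (2 * x + 1)
      ≤ S * (1 / (2 * x + 1)) + Q * -(I / (2 * x * N - (2 * x + 1) * I)) := by
        have e : S * (1 / (2 * x + 1)) + Q * -(I / (2 * x * N - (2 * x + 1) * I))
            - k * x / (2 * x + 1) =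
              (S * (2 * x * N - (2 * x + 1) * I) - Q * I * (2 * x + 1)
                - k * x * (2 * x * N - (2 * x + 1) * I)) /
              ((2 * x + 1) * (2 * x * N - (2 * x + 1) * I)) := by
          field_simp
          ring
        rw [← sub_nonneg, e]
        exact div_nonneg hnum (by positivity)
    _ ≤ _ := add_le_add (mul_le_mul_of_nonneg_left hlog_a hS)
        (mul_le_mul_of_nonneg_left hlog_b hQ)

theorem exp_mul_pow_le_tilt (hx : 0 < x) (hk : 0 ≤ k) {N I : ℝ} {s q : ℕ} (hI : 0 ≤ I)
    (hIN : I * (1 + 1 / (2 * x)) < N) (hT : (1 + 1 / x) * I * ((s + q) / N) + k * x ≤ s) :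
    exp (k * x / (2 * x + 1)) * (N - I) ^ q ≤
      (1 + 1 / (2 * x)) ^ s * (N - I * (1 + 1 / (2 * x))) ^ q := by
  have hIa : I ≤ I * (1 + 1 / (2 * x)) := le_mul_of_one_le_right hI (by simp; positivity)
  have hNI : 0 < N - I := by linarith
  have hratio : exp (k * x / (2 * x + 1)) ≤
      (1 + 1 / (2 * x)) ^ s * ((N - I * (1 + 1 / (2 * x))) / (N - I)) ^ q := by
    have hb : 0 < (N - I * (1 + 1 / (2 * x))) / (N - I) := div_pos (by linarith) hNI
    rw [← le_log_iff_exp_le (by positivity), log_mul (by positivity) (by positivity), log_pow,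
      log_pow]
    exact le_log_tilt_ratio hx hk hI hIN (Nat.cast_nonneg _) (Nat.cast_nonneg _) hT
  calc exp (k * x / (2 * x + 1)) * (N - I) ^ q
      ≤ (1 + 1 / (2 * x)) ^ s * ((N - I * (1 + 1 / (2 * x))) / (N - I)) ^ q * (N - I) ^ q := by
        gcongr
    _ = (1 + 1 / (2 * x)) ^ s * (N - I * (1 + 1 / (2 * x))) ^ q := by
        rw [mul_assoc, ← mul_pow, div_mul_cancel₀ _ hNI.ne']

theorem exp_neg_le_two_rpow (hx : 1 ≤ x) (hk : 0 ≤ k) :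
    exp (-(k * x / (2 * x + 1))) ≤ 2 ^ (-(1 / 3 * k)) := by
  rw [rpow_def_of_pos two_pos, exp_le_exp]
  have hlog2 : log 2 ≤ 1 := by linarith [log_le_sub_one_of_pos (two_pos (α := ℝ))]
  have hthird : k / 3 ≤ k * x / (2 * x + 1) := by
    rw [div_le_div_iff₀ (by norm_num) (by linarith)]
    nlinarith
  nlinarith [log_nonneg (one_le_two (α := ℝ))]

end Estimates

section Overflow

variable {m n : ℕ} {x k : ℝ}

def Overflows (x k : ℝ) (ω : Fin m → Fin n) (i : ℕ) : Prop :=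
  (1 + 1 / x) * i * ((m : ℝ) / n) + k * x ≤ ballsInPrefix ω i

theorem ballsInPrefix_le (ω : Fin m → Fin n) (i : ℕ) : ballsInPrefix ω i ≤ m :=
  (card_filter_le _ _).trans_eq (card_fin m)

theorem Overflows.of_prefixProfile_eq {i : ℕ} {ω ω' : Fin m → Fin n}
    (h : prefixProfile i ω = prefixProfile i ω') (hω : Overflows x k ω i) :
    Overflows x k ω' i := by
  rwa [Overflows, ← ballsInPrefix_eq_of_prefixProfile_eq le_rfl h]

theorem Overflows.le_floor (hx : 0 < x) (hk : 0 < k) (hn : 0 < n) {ω : Fin m → Fin n} {i : ℕ}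
    (h : Overflows x k ω i) : i ≤ ⌊n * x / (x + 1)⌋₊ :=
  Nat.le_floor (lt_mul_div_of_threshold_le hx hk (by exact_mod_cast hn) (Nat.cast_nonneg m)
    (h.trans (by exact_mod_cast ballsInPrefix_le ω i))).le

theorem exp_mul_card_prefixCylinder_le (hx : 0 < x) (hk : 0 < k) (hn : 0 < n)
    {ω₀ : Fin m → Fin n} {i : ℕ} (hover : Overflows x k ω₀ i) :
    exp (k * x / (2 * x + 1)) * #{ω | prefixProfile i ω = prefixProfile i ω₀} ≤
      ∑ ω with prefixProfile i ω = prefixProfile i ω₀,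
        ∏ b, tiltWeight n ⌊n * x / (x + 1)⌋₊ (1 + 1 / (2 * x)) (ω b) := by
  have hi := hover.le_floor hx hk hn
  have hi₀ := floor_mul_tilt_lt hx hn
  have hs := ballsInPrefix_le ω₀ i
  have hi₀n := lt_of_mul_tilt_lt hx hi₀
  rw [card_prefixCylinder, sum_prod_prefixCylinder fun j hj => tiltWeight_of_lt (hj.trans_le hi),
    sum_tiltWeight_filter_le hi hi₀n]
  push_cast [Nat.cast_sub hs, Nat.cast_sub (hi.trans hi₀n.le)]
  refine exp_mul_pow_le_tilt hx hk.le (Nat.cast_nonneg _) ?_ ?_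
  · exact (mul_le_mul_of_nonneg_right (Nat.cast_le.mpr hi) (by positivity)).trans_lt hi₀
  · rwa [← Nat.cast_add, Nat.add_sub_cancel' hs]

theorem exp_mul_card_overflows_le (hx : 0 < x) (hk : 0 < k) (hn : 0 < n) :
    exp (k * x / (2 * x + 1)) * #{ω : Fin m → Fin n | ∃ i, Overflows x k ω i} ≤
      (n : ℝ) ^ m := by
  set w := tiltWeight n ⌊n * x / (x + 1)⌋₊ (1 + 1 / (2 * x))
  have hi₀a := floor_mul_tilt_lt hx hn
  have hi₀ := lt_of_mul_tilt_lt hx hi₀a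
  have hw : ∀ j, 0 ≤ w j := tiltWeight_nonneg (by positivity) hi₀a.le hi₀
  calc exp (k * x / (2 * x + 1)) * #{ω : Fin m → Fin n | ∃ i, Overflows x k ω i}
      ≤ ∑ ω ∈ {ω : Fin m → Fin n | ∃ i, Overflows x k ω i}, ∏ b, w (ω b) := by
        refine mul_card_le_sum_of_forall_fiber _ (stoppedProfile fun i ω => Overflows x k ω i)
          _ _ fun ω₀ h₀ => ?_
        replace h₀ : ∃ i, Overflows x k ω₀ i := (mem_filter.mp h₀).2
        rw [filter_stoppedProfile_eq (fun i _ _ => Overflows.of_prefixProfile_eq) h₀]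
        exact exp_mul_card_prefixCylinder_le hx hk hn (Nat.sInf_mem h₀)
    _ ≤ ∑ ω : Fin m → Fin n, ∏ b, w (ω b) :=
        sum_le_sum_of_subset_of_nonneg (subset_univ _) fun ω _ _ => prod_nonneg fun b _ => hw _
    _ = (n : ℝ) ^ m := by
        rw [← Fintype.prod_sum, sum_tiltWeight hi₀, prod_const, card_univ, Fintype.card_fin]

end Overflow

theorem stmt1_general (c₁ c₂ : ℝ) :
    ∃ c₃ : ℝ, 0 < c₃ ∧
      ∀ (n m : ℕ), 0 < n → c₁ * n ≤ m → (m : ℝ) ≤ c₂ * n →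
      ∀ (x k : ℝ), 1 < x → 1 ≤ k →
      ((Finset.univ.filter (fun ω : Fin m → Fin n =>
          ∃ i : ℕ, 1 ≤ i ∧ i ≤ n ∧
            (1 + 1 / x) * i * ((m : ℝ) / n) + k * x ≤ ballsInPrefix ω i)).card : ℝ)
        ≤ (2 : ℝ) ^ (-(c₃ * k)) * (n : ℝ) ^ m := by
  refine ⟨1 / 3, by norm_num, fun n m hn _ _ x k hx hk => ?_⟩
  have hsub : (univ.filter fun ω : Fin m → Fin n => ∃ i : ℕ, 1 ≤ i ∧ i ≤ n ∧
        (1 + 1 / x) * i * ((m : ℝ) / n) + k * x ≤ ballsInPrefix ω i) ⊆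
      ({ω | ∃ i, Overflows x k ω i} : Finset (Fin m → Fin n)) := by
    intro ω
    simp only [mem_filter, mem_univ, true_and]
    exact fun ⟨i, _, _, hi⟩ => ⟨i, hi⟩
  have hcount :=
    exp_mul_card_overflows_le (m := m) (x := x) (k := k) (by linarith) (by linarith) hn
  calc _ ≤ (#{ω : Fin m → Fin n | ∃ i, Overflows x k ω i} : ℝ) := by
        exact_mod_cast card_le_card hsub
    _ ≤ exp (-(k * x / (2 * x + 1))) * (n : ℝ) ^ m := by
        rw [exp_neg, ← div_eq_inv_mul, le_div_iff₀' (exp_pos _)]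
        exact hcount
    _ ≤ (2 : ℝ) ^ (-(1 / 3 * k)) * (n : ℝ) ^ m := by
        gcongr
        exact exp_neg_le_two_rpow hx.le (by linarith)

/-- Place `m = Θ(n)` balls i.i.d. uniformly into `n` bins, `μ = m/n`.
For any `x > 1` and `k ≥ 1`, with probability `1 - 2^{-Ω(k)}`, there is no `i ∈ [n]`
such that the first `i` bins contain at least `(1 + 1/x) i μ + k x` balls. -/
theorem stmt1 (c₁ c₂ : ℝ) (hc₁ : 0 < c₁) (hc₂ : 0 < c₂) :
    ∃ c₃ : ℝ, 0 < c₃ ∧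
      ∀ (n m : ℕ), 0 < n → c₁ * n ≤ m → (m : ℝ) ≤ c₂ * n →
      ∀ (x k : ℝ), 1 < x → 1 ≤ k →
      ((Finset.univ.filter (fun ω : Fin m → Fin n =>
          ∃ i : ℕ, 1 ≤ i ∧ i ≤ n ∧
            (1 + 1 / x) * i * ((m : ℝ) / n) + k * x ≤ ballsInPrefix ω i)).card : ℝ)
        ≤ (2 : ℝ) ^ (-(c₃ * k)) * (n : ℝ) ^ m :=
  stmt1_general c₁ c₂
end

section
/- For any monotone lattice path $\gamma$ from the bottom-left corner to the top-right corner of an $a \times b$ grid, where $\ell = a + b$ is a power of two, the region under $\gamma$ can be partitioned into pairwise-disjoint axis-aligned rectangles such that the sum of the perimeters of the rectangles is $O(\ell \log \ell)$. -/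
/-- The set of unit cells `(column, row)` of an axis-aligned rectangle of cells
`r = ((c₁, r₁), (c₂, r₂))`, namely `{(j, i) : c₁ ≤ j < c₂, r₁ ≤ i < r₂}`. -/
def rectCells (r : (ℕ × ℕ) × (ℕ × ℕ)) : Set (ℕ × ℕ) :=
  {p | r.1.1 ≤ p.1 ∧ p.1 < r.2.1 ∧ r.1.2 ≤ p.2 ∧ p.2 < r.2.2}

/-- The perimeter of the rectangle of cells `r = ((c₁, r₁), (c₂, r₂))`. -/
def rectPerim (r : (ℕ × ℕ) × (ℕ × ℕ)) : ℕ :=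
  2 * ((r.2.1 - r.1.1) + (r.2.2 - r.1.2))

lemma sum_union_le' {α : Type*} [DecidableEq α] (s t : Finset α) (f : α → ℕ) :
    ∑ x ∈ s ∪ t, f x ≤ ∑ x ∈ s, f x + ∑ x ∈ t, f x := by
  have := Finset.sum_union_inter (s₁ := s) (s₂ := t) (f := f)
  omega

lemma key : ∀ t a b : ℕ, a + b = 2 ^ t → ∀ h : ℕ → ℕ, Monotone h → (∀ j, h j ≤ a) →
    ∃ R : Finset ((ℕ × ℕ) × (ℕ × ℕ)),
      (R : Set ((ℕ × ℕ) × (ℕ × ℕ))).PairwiseDisjoint rectCells ∧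
      (⋃ r ∈ R, rectCells r) = {p : ℕ × ℕ | p.1 < b ∧ p.2 < h p.1} ∧
      ∑ r ∈ R, rectPerim r ≤ t * 2 ^ (t + 1) := by
  intro t
  induction t with
  | zero =>
    intro a b hab h hmono hbound
    refine ⟨∅, by simp, ?_, by simp⟩
    ext p
    simp only [Finset.notMem_empty, Set.mem_iUnion, exists_prop, exists_false, false_and,
      Set.mem_setOf_eq]
    have := hbound p.1
    rw [false_iff]
    rintro ⟨h1, h2⟩
    omega
  | succ t ih =>
    intro a b hab h hmono hbound
    have hex : ∃ j, 2 ^ t ≤ j + h j := ⟨2 ^ t, Nat.le_add_right _ _⟩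
    obtain ⟨j1, hj1le, hj1spec, hj1min⟩ :
        ∃ j1, j1 ≤ 2 ^ t ∧ 2 ^ t ≤ j1 + h j1 ∧ ∀ j, j < j1 → j + h j < 2 ^ t :=
      ⟨Nat.find hex, Nat.find_le (Nat.le_add_right _ _), Nat.find_spec hex,
        fun j hj => not_le.mp (Nat.find_min hex hj)⟩
    set x := min b j1 with hxdef
    set y := 2 ^ t - x with hydef
    have hxb : x ≤ b := min_le_left _ _
    have hxm : x ≤ 2 ^ t := by omega
    have hxy : x + y = 2 ^ t := by omega
    have hab2 : a + b = 2 ^ t + 2 ^ t := by rw [hab]; ring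
    have hya : y ≤ a := by
      rcases le_total b j1 with hc | hc
      · omega
      · have hxj : x = j1 := by omega
        have h1 := hbound j1
        omega
    -- key claims about x, y
    have hA : ∀ j, j < x → h j ≤ y := by
      intro j hj
      have h2 : h j ≤ h (x - 1) := hmono (by omega)
      have h4 := hj1min (x - 1) (by omega)
      omega
    have hB : ∀ j, x ≤ j → j < b → y ≤ h j := by
      intro j hjx hjb
      have h5 : h x ≤ h j := hmono hjx
      have hxj1 : x = j1 := by omega
      have h6 : 2 ^ t ≤ x + h x := by rw [hxj1]; exact hj1spec
      omega
    -- left subproblem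
    obtain ⟨RL, hRLd, hRLu, hRLs⟩ :=
      ih y x (by omega) (fun j => min (h j) y)
        (fun i j hij => min_le_min (hmono hij) le_rfl)
        (fun j => min_le_right _ _)
    have hRLu' : (⋃ r ∈ RL, rectCells r) = {p : ℕ × ℕ | p.1 < x ∧ p.2 < h p.1} := by
      rw [hRLu]
      ext p
      simp only [Set.mem_setOf_eq]
      constructor
      · rintro ⟨h1, h2⟩
        exact ⟨h1, by have := hA p.1 h1; omega⟩
      · rintro ⟨h1, h2⟩
        exact ⟨h1, by have := hA p.1 h1; omega⟩
    -- right subproblem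
    obtain ⟨RR, hRRd, hRRu, hRRs⟩ :=
      ih (a - y) (b - x) (by omega) (fun j => h (j + x) - y)
        (fun i j hij => Nat.sub_le_sub_right (hmono (by omega)) y)
        (fun j => Nat.sub_le_sub_right (hbound _) y)
    -- translation
    set tr : (ℕ × ℕ) × (ℕ × ℕ) → (ℕ × ℕ) × (ℕ × ℕ) :=
      fun r => ((r.1.1 + x, r.1.2 + y), (r.2.1 + x, r.2.2 + y)) with htrdef
    have htrinj : Function.Injective tr := by
      rintro ⟨⟨a1, a2⟩, a3, a4⟩ ⟨⟨b1, b2⟩, b3, b4⟩ hrs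
      simp only [htrdef, Prod.mk.injEq] at hrs
      simp only [Prod.mk.injEq]
      omega
    have hshiftinj : Function.Injective (fun p : ℕ × ℕ => (p.1 + x, p.2 + y)) := by
      rintro ⟨p1, p2⟩ ⟨q1, q2⟩ hpq
      simp only [Prod.mk.injEq] at hpq ⊢
      omega
    have hcells : ∀ r, rectCells (tr r) =
        (fun p : ℕ × ℕ => (p.1 + x, p.2 + y)) '' rectCells r := by
      intro r
      ext ⟨p1, p2⟩
      simp only [rectCells, htrdef, Set.mem_setOf_eq, Set.mem_image, Prod.exists,
        Prod.mk.injEq]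
      constructor
      · rintro ⟨h1, h2, h3, h4⟩
        exact ⟨p1 - x, p2 - y, ⟨by omega, by omega, by omega, by omega⟩, by omega, by omega⟩
      · rintro ⟨q1, q2, ⟨h1, h2, h3, h4⟩, h5, h6⟩
        omega
    have hperim : ∀ r, rectPerim (tr r) = rectPerim r := by
      intro r
      simp only [rectPerim, htrdef]
      omega
    have hRRtu : (⋃ r ∈ RR.image tr, rectCells r) =
        {p : ℕ × ℕ | x ≤ p.1 ∧ p.1 < b ∧ y ≤ p.2 ∧ p.2 < h p.1} := by
      ext ⟨p1, p2⟩
      simp only [Set.mem_iUnion, Finset.mem_image, exists_prop, Set.mem_setOf_eq]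
      constructor
      · rintro ⟨r, ⟨r0, hr0, rfl⟩, hp⟩
        rw [hcells] at hp
        obtain ⟨⟨q1, q2⟩, hq, heq⟩ := hp
        have hq' : (q1, q2) ∈ ⋃ r ∈ RR, rectCells r := Set.mem_iUnion₂.mpr ⟨r0, hr0, hq⟩
        rw [hRRu] at hq'
        simp only [Set.mem_setOf_eq] at hq'
        simp only [Prod.mk.injEq] at heq
        obtain ⟨he1, he2⟩ := heq
        subst he1; subst he2
        have := hbound (q1 + x)
        exact ⟨by omega, by omega, by omega, by omega⟩
      · rintro ⟨hp1, hp2, hp3, hp4⟩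
        have hq : ((p1 - x, p2 - y) : ℕ × ℕ) ∈
            {p : ℕ × ℕ | p.1 < b - x ∧ p.2 < (fun j => h (j + x) - y) p.1} := by
          simp only [Set.mem_setOf_eq]
          have hpx : p1 - x + x = p1 := by omega
          rw [hpx]
          omega
        rw [← hRRu] at hq
        simp only [Set.mem_iUnion, exists_prop] at hq
        obtain ⟨r0, hr0, hmem⟩ := hq
        refine ⟨tr r0, ⟨r0, hr0, rfl⟩, ?_⟩
        rw [hcells]
        exact ⟨(p1 - x, p2 - y), hmem, by simp only [Prod.mk.injEq]; omega⟩
    -- mid rectangle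
    set rmid : (ℕ × ℕ) × (ℕ × ℕ) := ((x, 0), (b, y)) with hmiddef
    have hmidcells : rectCells rmid = {p : ℕ × ℕ | x ≤ p.1 ∧ p.1 < b ∧ p.2 < y} := by
      ext ⟨p1, p2⟩
      simp only [rectCells, hmiddef, Set.mem_setOf_eq]
      omega
    refine ⟨RL ∪ insert rmid (RR.image tr), ?_, ?_, ?_⟩
    · -- pairwise disjoint
      have hsubL : ∀ r ∈ RL, rectCells r ⊆ {p : ℕ × ℕ | p.1 < x ∧ p.2 < h p.1} := by
        intro r hr
        rw [← hRLu']
        exact Set.subset_iUnion₂ (s := fun i _ => rectCells i) r hr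
      have hsubM : rectCells rmid ⊆ {p : ℕ × ℕ | x ≤ p.1 ∧ p.2 < y} := by
        rw [hmidcells]
        rintro ⟨p1, p2⟩ ⟨h1, h2, h3⟩
        exact ⟨h1, h3⟩
      have hsubR : ∀ r ∈ RR.image tr, rectCells r ⊆ {p : ℕ × ℕ | x ≤ p.1 ∧ y ≤ p.2} := by
        intro r hr p hp
        have : p ∈ ⋃ r ∈ RR.image tr, rectCells r := Set.mem_iUnion₂.mpr ⟨r, hr, hp⟩
        rw [hRRtu] at this
        exact ⟨this.1, this.2.2.1⟩
      have hdLM : Disjoint {p : ℕ × ℕ | p.1 < x ∧ p.2 < h p.1}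
          {p : ℕ × ℕ | x ≤ p.1 ∧ p.2 < y} := by
        rw [Set.disjoint_left]; rintro p ⟨h1, _⟩ ⟨h2, _⟩; omega
      have hdLR : Disjoint {p : ℕ × ℕ | p.1 < x ∧ p.2 < h p.1}
          {p : ℕ × ℕ | x ≤ p.1 ∧ y ≤ p.2} := by
        rw [Set.disjoint_left]; rintro p ⟨h1, _⟩ ⟨h2, _⟩; omega
      have hdMR : Disjoint {p : ℕ × ℕ | x ≤ p.1 ∧ p.2 < y}
          {p : ℕ × ℕ | x ≤ p.1 ∧ y ≤ p.2} := by
        rw [Set.disjoint_left]; rintro p ⟨_, h1⟩ ⟨_, h2⟩; omega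
      intro r hr s hs hrs
      simp only [Finset.coe_union, Set.mem_union, Finset.coe_insert, Set.mem_insert_iff,
        Finset.mem_coe, Finset.coe_image, Set.mem_image] at hr hs
      show Disjoint (rectCells r) (rectCells s)
      rcases hr with hrL | hr' <;> rcases hs with hsL | hs'
      · exact hRLd hrL hsL hrs
      · rcases hs' with rfl | hsR
        · exact Set.disjoint_of_subset (hsubL r hrL) hsubM hdLM
        · exact Set.disjoint_of_subset (hsubL r hrL)
            (hsubR s (by simpa [Finset.mem_image] using hsR)) hdLR
      · rcases hr' with rfl | hrR
        · exact (Set.disjoint_of_subset (hsubL s hsL) hsubM hdLM).symm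
        · exact (Set.disjoint_of_subset (hsubL s hsL)
            (hsubR r (by simpa [Finset.mem_image] using hrR)) hdLR).symm
      · rcases hr' with rfl | hrR <;> rcases hs' with rfl | hsR
        · exact absurd rfl hrs
        · exact Set.disjoint_of_subset hsubM
            (hsubR s (by simpa [Finset.mem_image] using hsR)) hdMR
        · exact (Set.disjoint_of_subset hsubM
            (hsubR r (by simpa [Finset.mem_image] using hrR)) hdMR).symm
        · obtain ⟨r0, hr0, rfl⟩ := hrR
          obtain ⟨s0, hs0, rfl⟩ := hsR
          have hne0 : r0 ≠ s0 := fun hh => hrs (by rw [hh])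
          rw [hcells, hcells]
          exact Set.disjoint_image_of_injective hshiftinj (hRRd hr0 hs0 hne0)
    · -- union
      rw [Finset.set_biUnion_union, Finset.set_biUnion_insert, hRLu', hRRtu, hmidcells]
      ext ⟨p1, p2⟩
      simp only [Set.mem_union, Set.mem_setOf_eq]
      constructor
      · rintro (⟨h1, h2⟩ | ⟨h1, h2, h3⟩ | ⟨h1, h2, h3, h4⟩)
        · exact ⟨by omega, h2⟩
        · exact ⟨h2, lt_of_lt_of_le h3 (hB p1 h1 h2)⟩
        · exact ⟨h2, h4⟩
      · rintro ⟨h1, h2⟩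
        by_cases hc : p1 < x
        · exact Or.inl ⟨hc, h2⟩
        · by_cases hc2 : p2 < y
          · exact Or.inr (Or.inl ⟨by omega, h1, hc2⟩)
          · exact Or.inr (Or.inr ⟨by omega, h1, by omega, h2⟩)
    · -- sum bound
      have hs1 : ∑ r ∈ RR.image tr, rectPerim r = ∑ r ∈ RR, rectPerim r := by
        rw [Finset.sum_image (fun a _ b _ hab => htrinj hab)]
        exact Finset.sum_congr rfl fun r _ => hperim r
      have hs2 : ∑ r ∈ insert rmid (RR.image tr), rectPerim r ≤
          rectPerim rmid + ∑ r ∈ RR.image tr, rectPerim r := by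
        by_cases hc : rmid ∈ RR.image tr
        · rw [Finset.insert_eq_self.mpr hc]; omega
        · rw [Finset.sum_insert hc]
      have hmp : rectPerim rmid ≤ 2 ^ (t + 2) := by
        simp only [rectPerim, hmiddef]
        have h1 : b - x ≤ 2 ^ t := by omega
        have h2 : 2 ^ (t + 2) = 2 ^ t + 2 ^ t + 2 ^ t + 2 ^ t := by ring
        omega
      have := sum_union_le' RL (insert rmid (RR.image tr)) rectPerim
      have hpow : (t + 1) * 2 ^ (t + 1 + 1) = t * 2 ^ (t + 1) + (2 ^ (t + 2) + t * 2 ^ (t + 1)) := by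
        ring
      omega

/-- A monotone lattice path through an `a × b` grid is encoded by a
monotone function `h : ℕ → ℕ` with `h j ≤ a`, where `h j` is the number of cells lying
below the path in column `j`; the region under the path is `{(j, i) : j < b, i < h j}`.
If `ℓ = a + b` is a power of two, this region can be partitioned into pairwise-disjoint
axis-aligned rectangles whose perimeters sum to `O(ℓ log ℓ)`. -/
theorem stmt4 :
    ∃ C : ℕ, 0 < C ∧
      ∀ (a b : ℕ), (∃ t : ℕ, a + b = 2 ^ t) →
      ∀ h : ℕ → ℕ, Monotone h → (∀ j, h j ≤ a) →
      ∃ R : Finset ((ℕ × ℕ) × (ℕ × ℕ)),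
        (R : Set ((ℕ × ℕ) × (ℕ × ℕ))).PairwiseDisjoint rectCells ∧
        (⋃ r ∈ R, rectCells r) = {p : ℕ × ℕ | p.1 < b ∧ p.2 < h p.1} ∧
        ∑ r ∈ R, rectPerim r ≤ C * (a + b) * (Nat.log 2 (a + b) + 1) := by
  refine ⟨2, by norm_num, ?_⟩
  rintro a b ⟨t, hab⟩ h hmono hbound
  obtain ⟨R, hd, hu, hs⟩ := key t a b hab h hmono hbound
  refine ⟨R, hd, hu, ?_⟩
  rw [hab, Nat.log_pow (by norm_num)]
  have : 2 * 2 ^ t * (t + 1) = t * 2 ^ (t + 1) + 2 ^ (t + 1) := by ring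
  omega
end

section
/- Consider a $\sqrt{\mu} \times \sqrt{\mu}$ grid in which each cell independently contains $\mathrm{Pois}(1)$ blue dots and $\mathrm{Pois}(1)$ red dots. With probability $1 - 1/\mathrm{poly}(\mu)$, every monotone lattice path through the grid has blue-red deviation at most $O(\sqrt{\mu} \log^2 \mu)$. -/
open scoped Classical
open ProbabilityTheory

/-- Joint probability mass of a configuration of an `s × s` grid in which each cell
independently contains `Pois(1)` blue dots (first coordinate) and `Pois(1)` red dots
(second coordinate). -/
noncomputable def gridPMF {s : ℕ} (ω : Fin s × Fin s → ℕ × ℕ) : ℝ :=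
  ∏ c : Fin s × Fin s, poissonPMFReal 1 (ω c).1 * poissonPMFReal 1 (ω c).2

/-- Blue-red deviation of the monotone lattice path encoded by the monotone column
heights `h : Fin s → ℕ` (cell `(row i, column j)` lies below the path iff `i < h j`):
number of blue dots below the path minus number of red dots below the path. -/
noncomputable def pathDeviation {s : ℕ} (ω : Fin s × Fin s → ℕ × ℕ)
    (h : Fin s → ℕ) : ℤ :=
  ∑ c : Fin s × Fin s,
    if (c.1 : ℕ) < h c.2 then ((ω c).1 : ℤ) - ((ω c).2 : ℤ) else 0

open scoped ENNReal NNReal Nat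
open Finset Real MeasureTheory

/-!
Chaining over dyadic scales. Extend the column heights of a path to a monotone `H : ℕ → ℕ` and
let `coarsen u H` be constant on blocks of `u` columns. The deviation of the path telescopes into
the deviations of the strips between the coarsenings at consecutive scales `2 ^ ℓ ≤ s`, plus that
of a full-width rectangle. At scale `u` a strip has area at most `u s` and is determined by
`s / u + 1` block heights, hence is one of at most `(s + 1) ^ (s / u + 1)` candidates: area times
entropy is `O(s² log s)` at every scale. The dot difference of a cell has mgf
`exp (e^θ + e^(-θ) - 2) ≤ exp (2 θ²)` for `|θ| ≤ 1`, so a Chernoff bound and a union bound over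
the candidates show that, outside probability `s^(-(2c+2))` per scale, every strip deviates by
`O(s log s)`. Summing over the `O(log s)` scales gives `O(s log² s)`.
-/

theorem ENNReal.tsum_pi_prod {ι β : Type*} [Fintype ι] (f : ι → β → ℝ≥0∞) :
    ∑' ω : ι → β, ∏ i, f i (ω i) = ∏ i, ∑' b, f i b := by
  refine Fintype.induction_empty_option
    (P := fun ι _ => ∀ f : ι → β → ℝ≥0∞,
      ∑' ω : ι → β, ∏ i, f i (ω i) = ∏ i, ∑' b, f i b)
    ?_ ?_ ?_ ι f
  · intro ι ι' _ e ih f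
    let := Fintype.ofEquiv ι' e.symm
    rw [← (e.arrowCongr (Equiv.refl β)).tsum_eq, ← e.prod_comp]
    simpa [Equiv.arrowCongr_apply, ← e.prod_comp] using ih (fun i => f (e i))
  · intro f
    simp
  · intro ι _ ih f
    rw [← (Equiv.piOptionEquivProd (β := fun _ => β)).symm.tsum_eq, ENNReal.tsum_prod',
      Fintype.prod_option]
    simp only [Equiv.piOptionEquivProd_symm_apply, Fintype.prod_option]
    simp_rw [ENNReal.tsum_mul_left, ih, ENNReal.tsum_mul_right]

theorem Finset.sum_range_mul_div {M : Type*} [AddCommMonoid M] (f : ℕ → M) (u n : ℕ) :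
    ∑ j ∈ range (u * n), f (j / u) = u • ∑ q ∈ range n, f q := by
  rcases u.eq_zero_or_pos with rfl | hu
  · simp
  induction n with
  | zero => simp
  | succ n ih =>
    have hblock : ∀ x ∈ range u, f ((u * n + x) / u) = f n := fun x hx => by
      rw [Nat.mul_add_div hu, Nat.div_eq_of_lt (mem_range.mp hx), add_zero]
    rw [mul_add_one, sum_range_add, ih, sum_congr rfl hblock, sum_range_succ, sum_const,
      card_range, smul_add]

namespace PMF

theorem toOuterMeasure_add_compl {α : Type*} (p : PMF α) (S : Set α) :
    p.toOuterMeasure S + p.toOuterMeasure Sᶜ = 1 := by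
  rw [toOuterMeasure_apply, toOuterMeasure_apply, ← ENNReal.tsum_add, ← p.tsum_coe]
  exact tsum_congr fun x => congrFun (S.indicator_self_add_compl p) x

variable {ι β : Type*} [Fintype ι]

noncomputable def pi (p : ι → PMF β) : PMF (ι → β) :=
  ⟨fun ω => ∏ i, p i (ω i), by
    rw [ENNReal.summable.hasSum_iff, ENNReal.tsum_pi_prod]
    simp⟩

@[simp]
theorem pi_apply (p : ι → PMF β) (ω : ι → β) : pi p ω = ∏ i, p i (ω i) := rfl

theorem toOuterMeasure_pi_lt_sum_le (p : ι → PMF β) (X : ι → β → ℝ) (A : Finset ι)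
    (t : ℝ) {θ : ℝ} (hθ : 0 ≤ θ) :
    (pi p).toOuterMeasure {ω | t < ∑ i ∈ A, X i (ω i)}
      ≤ ENNReal.ofReal (exp (-(θ * t)))
          * ∏ i ∈ A, ∑' b, ENNReal.ofReal (exp (θ * X i b)) * p i b := by
  set g : ι → β → ℝ≥0∞ :=
    fun i b => (if i ∈ A then ENNReal.ofReal (exp (θ * X i b)) else 1) * p i b
  have hg : ∀ ω : ι → β,
      ∏ i, g i (ω i) = ENNReal.ofReal (exp (θ * ∑ i ∈ A, X i (ω i))) * pi p ω := by
    intro ω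
    rw [mul_sum, exp_sum, ENNReal.ofReal_prod_of_nonneg fun _ _ => (exp_pos _).le]
    simp only [g, prod_mul_distrib, prod_ite_mem, univ_inter, pi_apply]
  -- Markov's inequality for `exp (θ * (∑ i ∈ A, X i (ω i) - t))`
  have hmarkov : ∀ ω, {ω | t < ∑ i ∈ A, X i (ω i)}.indicator (pi p) ω
      ≤ ENNReal.ofReal (exp (-(θ * t))) * ∏ i, g i (ω i) := by
    intro ω
    by_cases hω : t < ∑ i ∈ A, X i (ω i)
    · rw [Set.indicator_of_mem (show ω ∈ {ω | t < ∑ i ∈ A, X i (ω i)} from hω), hg,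
        ← mul_assoc, ← ENNReal.ofReal_mul (exp_pos _).le, ← exp_add]
      refine le_mul_of_one_le_left zero_le (ENNReal.one_le_ofReal.mpr (one_le_exp ?_))
      nlinarith
    · rw [Set.indicator_of_notMem (show ω ∉ {ω | t < ∑ i ∈ A, X i (ω i)} from hω)]
      exact zero_le
  have hcell : ∀ i, ∑' b, g i b
      = if i ∈ A then ∑' b, ENNReal.ofReal (exp (θ * X i b)) * p i b else 1 := by
    intro i
    split_ifs <;> simp [g, *]
  calc _ ≤ ∑' ω : ι → β, ENNReal.ofReal (exp (-(θ * t))) * ∏ i, g i (ω i) := by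
        rw [toOuterMeasure_apply]
        exact ENNReal.tsum_le_tsum hmarkov
    _ = _ := by
        rw [ENNReal.tsum_mul_left, ENNReal.tsum_pi_prod]
        simp only [hcell, prod_ite_mem, univ_inter]

end PMF

theorem tsum_ofReal_exp_mul_poissonMeasure (r : ℝ≥0) (θ : ℝ) :
    ∑' n : ℕ, ENNReal.ofReal (exp (θ * n)) * poissonMeasure r {n}
      = ENNReal.ofReal (exp (r * (exp θ - 1))) := by
  have hsum : HasSum (fun n : ℕ => exp (θ * n) * (exp (-r) * r ^ n / n !))
      (exp (r * (exp θ - 1))) := by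
    have h := (NormedSpace.expSeries_div_hasSum_exp (r * exp θ : ℝ)).mul_left (exp (-r))
    rw [← exp_eq_exp_ℝ, ← exp_add,
      show -(r : ℝ) + r * exp θ = r * (exp θ - 1) by ring] at h
    refine h.congr_fun fun n => ?_
    rw [mul_pow, ← exp_nat_mul, mul_comm (n : ℝ) θ]
    ring
  simp_rw [poissonMeasure_singleton, ← ENNReal.ofReal_mul (exp_pos _).le]
  rw [← ENNReal.ofReal_tsum_of_nonneg (fun n => by positivity) hsum.summable, hsum.tsum_eq]

theorem exp_add_exp_neg_le {θ : ℝ} (hθ : |θ| ≤ 1) :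
    exp θ + exp (-θ) ≤ 2 + 2 * θ ^ 2 := by
  have h₁ := (abs_le.mp (abs_exp_sub_one_sub_id_le hθ)).2
  have h₂ := (abs_le.mp (abs_exp_sub_one_sub_id_le (x := -θ) (by rwa [abs_neg]))).2
  nlinarith

noncomputable def cellLaw : PMF (ℕ × ℕ) := ((poissonMeasure 1).prod (poissonMeasure 1)).toPMF

theorem cellLaw_apply (q : ℕ × ℕ) :
    cellLaw q = poissonMeasure 1 {q.1} * poissonMeasure 1 {q.2} := by
  rw [cellLaw, Measure.toPMF_apply, ← Measure.prod_prod, Set.singleton_prod_singleton]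

theorem tsum_ofReal_exp_mul_cellLaw_le {θ : ℝ} (hθ : |θ| ≤ 1) :
    ∑' q : ℕ × ℕ, ENNReal.ofReal (exp (θ * ((q.1 : ℝ) - q.2))) * cellLaw q
      ≤ ENNReal.ofReal (exp (2 * θ ^ 2)) := by
  have hsplit : ∀ q : ℕ × ℕ, ENNReal.ofReal (exp (θ * ((q.1 : ℝ) - q.2))) * cellLaw q
      = (ENNReal.ofReal (exp (θ * q.1)) * poissonMeasure 1 {q.1})
        * (ENNReal.ofReal (exp (-θ * q.2)) * poissonMeasure 1 {q.2}) := by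
    intro q
    rw [cellLaw_apply, show θ * ((q.1 : ℝ) - q.2) = θ * q.1 + -θ * q.2 by ring, exp_add,
      ENNReal.ofReal_mul (exp_pos _).le]
    ring
  simp_rw [hsplit, ENNReal.tsum_prod', ENNReal.tsum_mul_left, ENNReal.tsum_mul_right,
    tsum_ofReal_exp_mul_poissonMeasure, ← ENNReal.ofReal_mul (exp_pos _).le, ← exp_add]
  refine ENNReal.ofReal_le_ofReal (exp_le_exp.mpr ?_)
  have := exp_add_exp_neg_le hθ
  push_cast
  linarith

noncomputable def dotLaw (κ : Type*) [Fintype κ] : PMF (κ → ℕ × ℕ) :=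
  PMF.pi fun _ => cellLaw

section Deviation

variable {κ : Type*}

def deviation (R : Finset κ) (ω : κ → ℕ × ℕ) : ℤ :=
  ∑ c ∈ R, (((ω c).1 : ℤ) - (ω c).2)

theorem deviation_sdiff [DecidableEq κ] {A B : Finset κ} (h : B ⊆ A) (ω : κ → ℕ × ℕ) :
    deviation (A \ B) ω = deviation A ω - deviation B ω :=
  sum_sdiff_eq_sub h

variable [Fintype κ]

theorem dotLaw_lt_deviation_le (R : Finset κ) (t : ℝ) {θ : ℝ} (hθ₀ : 0 ≤ θ)
    (hθ₁ : θ ≤ 1) :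
    (dotLaw κ).toOuterMeasure {ω | t < deviation R ω}
      ≤ ENNReal.ofReal (exp (2 * θ ^ 2 * R.card - θ * t)) := by
  have hset : {ω : κ → ℕ × ℕ | t < deviation R ω}
      = {ω | t < ∑ c ∈ R, (fun _ (q : ℕ × ℕ) => (q.1 : ℝ) - q.2) c (ω c)} := by
    ext ω
    simp [deviation]
  rw [hset, dotLaw]
  refine (PMF.toOuterMeasure_pi_lt_sum_le _ (fun _ (q : ℕ × ℕ) => (q.1 : ℝ) - q.2) R t
    hθ₀).trans ?_
  calc _ ≤ ENNReal.ofReal (exp (-(θ * t))) * ∏ c ∈ R, ENNReal.ofReal (exp (2 * θ ^ 2)) := by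
        gcongr with c hc
        exact tsum_ofReal_exp_mul_cellLaw_le (abs_le.mpr ⟨by linarith, hθ₁⟩)
    _ = _ := by
        rw [prod_const, ← ENNReal.ofReal_pow (exp_pos _).le,
          ← ENNReal.ofReal_mul (exp_pos _).le, ← exp_nat_mul, ← exp_add]
        ring_nf

theorem dotLaw_three_mul_lt_deviation_le (R : Finset κ) {b D : ℝ} (hD : 0 < D) (hDb : D ≤ b)
    (hRD : R.card * D ≤ b ^ 2) :
    (dotLaw κ).toOuterMeasure {ω | 3 * b < deviation R ω} ≤ ENNReal.ofReal (exp (-D)) := by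
  have hb : 0 < b := hD.trans_le hDb
  -- `θ = D / b` makes the exponent `2 D (|R| D) / b² - 3 D ≤ -D`
  refine (dotLaw_lt_deviation_le R _ (div_pos hD hb).le ((div_le_one hb).mpr hDb)).trans ?_
  refine ENNReal.ofReal_le_ofReal (exp_le_exp.mpr ?_)
  have hquad : (D / b) ^ 2 * R.card ≤ D := by
    rw [div_pow, div_mul_eq_mul_div, div_le_iff₀ (by positivity)]
    nlinarith
  have hlin : D / b * (3 * b) = 3 * D := by field_simp
  nlinarith

theorem dotLaw_exists_three_mul_lt_deviation_le (𝓡 : Finset (Finset κ)) {m : ℕ}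
    (hm : ∀ R ∈ 𝓡, R.card ≤ m) {b D : ℝ} (hD : 0 < D) (hDb : D ≤ b)
    (hmD : m * D ≤ b ^ 2) :
    (dotLaw κ).toOuterMeasure {ω | ∃ R ∈ 𝓡, 3 * b < deviation R ω}
      ≤ 𝓡.card * ENNReal.ofReal (exp (-D)) := by
  have hset : {ω | ∃ R ∈ 𝓡, 3 * b < (deviation R ω : ℝ)}
      = ⋃ R ∈ 𝓡, {ω | 3 * b < (deviation R ω : ℝ)} := by
    ext
    simp
  rw [hset, ← nsmul_eq_mul]
  refine (measure_biUnion_finset_le 𝓡 _).trans (sum_le_card_nsmul _ _ _ fun R hR => ?_)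
  refine dotLaw_three_mul_lt_deviation_le R hD hDb (le_trans ?_ hmD)
  gcongr
  exact_mod_cast hm R hR

end Deviation

section Paths

variable {s : ℕ}

def below (g : ℕ → ℕ) : Finset (Fin s × Fin s) := univ.filter fun c => (c.1 : ℕ) < g c.2

theorem pathDeviation_eq_deviation_below (ω : Fin s × Fin s → ℕ × ℕ) (h : Fin s → ℕ)
    {H : ℕ → ℕ} (hH : ∀ j : Fin s, H j = h j) :
    pathDeviation ω h = deviation (below H) ω := by
  simp only [pathDeviation, deviation, below, sum_filter, hH]

theorem below_congr {g g' : ℕ → ℕ} (h : ∀ j < s, g j = g' j) :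
    below (s := s) g = below g' :=
  filter_congr fun c _ => by rw [h c.2 c.2.isLt]

theorem below_mono {g g' : ℕ → ℕ} (h : ∀ j, g' j ≤ g j) : below (s := s) g' ⊆ below g :=
  fun c => by
    simp only [below, mem_filter, mem_univ, true_and]
    exact fun hc => hc.trans_le (h c.2)

theorem card_below_sdiff_le (g g' : ℕ → ℕ) :
    (below (s := s) g \ below g').card ≤ ∑ j ∈ range s, (g j - g' j) := by
  calc (below (s := s) g \ below g').card
      ≤ ((range s).sigma fun j => Ico (g' j) (g j)).card := by
        refine card_le_card_of_injOn (fun c => ⟨c.2, c.1⟩) (fun c hc => ?_)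
          (fun c _ d _ hcd => ?_)
        · simp only [below, coe_sdiff, coe_filter, Set.mem_sdiff, Set.mem_ofPred_eq, mem_univ,
            true_and, not_lt] at hc
          simp [hc]
        · simp only [Sigma.mk.injEq, heq_eq_eq] at hcd
          exact Prod.ext (Fin.ext hcd.2) (Fin.ext hcd.1)
    _ = ∑ j ∈ range s, (g j - g' j) := by simp [card_sigma]

def coarsen (u : ℕ) (H : ℕ → ℕ) : ℕ → ℕ := fun j => H (u * (j / u))

@[simp]
theorem coarsen_one (H : ℕ → ℕ) : coarsen 1 H = H := by
  ext j; simp [coarsen]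

theorem coarsen_of_lt (H : ℕ → ℕ) {u j : ℕ} (hj : j < u) : coarsen u H j = H 0 := by
  simp [coarsen, Nat.div_eq_of_lt hj]

theorem coarsen_coarsen_of_dvd (H : ℕ → ℕ) {u v : ℕ} (huv : u ∣ v) :
    coarsen v (coarsen u H) = coarsen v H := by
  obtain ⟨n, rfl⟩ := huv
  ext j
  rcases u.eq_zero_or_pos with rfl | hu
  · simp [coarsen]
  simp only [coarsen, mul_assoc, Nat.mul_div_cancel_left _ hu]

theorem coarsen_le_coarsen_of_dvd {H : ℕ → ℕ} (hH : Monotone H) {u v : ℕ} (huv : u ∣ v)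
    (j : ℕ) :
    coarsen v H j ≤ coarsen u H j := by
  obtain ⟨n, rfl⟩ := huv
  refine hH ?_
  rw [← Nat.div_div_eq_div_mul, mul_assoc]
  exact Nat.mul_le_mul_left u (Nat.mul_div_le _ n)

theorem coarsen_congr {G G' : ℕ → ℕ} (h : ∀ j < s, G j = G' j) (u : ℕ) :
    ∀ j < s, coarsen u G j = coarsen u G' j :=
  fun j hj => h _ ((Nat.mul_div_le j u).trans_lt hj)

theorem sum_coarsen_sub_coarsen_mul_two_le {H : ℕ → ℕ} (hH : Monotone H)
    (hHs : ∀ j, H j ≤ s) {u : ℕ} (hu : 0 < u) :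
    ∑ j ∈ range s, (coarsen u H j - coarsen (u * 2) H j) ≤ u * s := by
  set G : ℕ → ℕ := fun q => H (u * q)
  have hG : Monotone G := fun a b hab => hH (Nat.mul_le_mul_left u hab)
  have hterm : ∀ j, coarsen u H j - coarsen (u * 2) H j = G (j / u) - G (2 * (j / u / 2)) := by
    intro j
    simp only [coarsen, G, Nat.div_div_eq_div_mul, mul_assoc]
  -- an odd block loses at most what `G` gains over the previous block
  have hodd : ∀ q, G q - G (2 * (q / 2)) ≤ G q - G (q - 1) :=
    fun q => Nat.sub_le_sub_left (hG (by omega)) _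
  calc ∑ j ∈ range s, (coarsen u H j - coarsen (u * 2) H j)
      ≤ ∑ j ∈ range (u * s), (G (j / u) - G (2 * (j / u / 2))) := by
        simp only [hterm]
        exact sum_le_sum_of_subset (range_subset_range.mpr (Nat.le_mul_of_pos_left s hu))
    _ = u * ∑ q ∈ range s, (G q - G (2 * (q / 2))) :=
        sum_range_mul_div (fun q => G q - G (2 * (q / 2))) u s
    _ ≤ u * ∑ q ∈ range (s + 1), (G q - G (q - 1)) := by
        refine Nat.mul_le_mul_left u ((sum_le_sum fun q _ => hodd q).trans
          (sum_le_sum_of_subset (range_subset_range.mpr s.le_succ)))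
    _ = u * (G s - G 0) := by
        rw [sum_range_succ', Nat.sub_self, add_zero, ← sum_range_tsub hG]
        rfl
    _ ≤ u * s := Nat.mul_le_mul_left u ((Nat.sub_le _ _).trans (hHs _))

theorem deviation_below_eq_sum {H : ℕ → ℕ} (hH : Monotone H)
    (ω : Fin s × Fin s → ℕ × ℕ) (L : ℕ) :
    deviation (below H) ω
      = ∑ ℓ ∈ range L,
          deviation (below (coarsen (2 ^ ℓ) H) \ below (coarsen (2 ^ ℓ * 2) H)) ω
        + deviation (below (coarsen (2 ^ L) H)) ω := by
  have hstep : ∀ ℓ, deviation (below (coarsen (2 ^ ℓ) H) \ below (coarsen (2 ^ ℓ * 2) H)) ω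
      = deviation (below (coarsen (2 ^ ℓ) H)) ω
        - deviation (below (coarsen (2 ^ (ℓ + 1)) H)) ω := fun ℓ => by
    rw [pow_succ]
    exact deviation_sdiff (below_mono (coarsen_le_coarsen_of_dvd hH (dvd_mul_right _ _))) ω
  simp only [hstep, sum_range_sub', pow_zero, coarsen_one]
  ring

-- `Fin.ofNat` reduces `j / u` modulo `k + 1`, which is harmless for `j < s` when `k = s / u`.
def blockHeight (u : ℕ) {k n : ℕ} (w : Fin (k + 1) → Fin n) : ℕ → ℕ :=
  fun j => w (Fin.ofNat (k + 1) (j / u))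

-- The tail bound needs the area filter; strips of monotone paths pass it.
def levelStrips (s u : ℕ) : Finset (Finset (Fin s × Fin s)) :=
  {R ∈ univ.image fun w : Fin (s / u + 1) → Fin (s + 1) =>
      below (blockHeight u w) \ below (coarsen (u * 2) (blockHeight u w)) | R.card ≤ u * s}

theorem card_levelStrips_le (u : ℕ) : (levelStrips s u).card ≤ (s + 1) ^ (s / u + 1) :=
  (card_filter_le _ _).trans (card_image_le.trans (by simp))

theorem mem_levelStrips {H : ℕ → ℕ} (hH : Monotone H) (hHs : ∀ j, H j ≤ s) {u : ℕ}
    (hu : 0 < u) : below (coarsen u H) \ below (coarsen (u * 2) H) ∈ levelStrips s u := by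
  set w : Fin (s / u + 1) → Fin (s + 1) := fun q => ⟨H (u * q), Nat.lt_succ_of_le (hHs _)⟩
  have hw : ∀ j < s, blockHeight u w j = coarsen u H j := fun j hj => by
    simp [blockHeight, coarsen, w,
      Nat.mod_eq_of_lt (Nat.lt_succ_of_le (Nat.div_le_div_right hj.le))]
  have hstrip : below (blockHeight u w) \ below (coarsen (u * 2) (blockHeight u w))
      = below (s := s) (coarsen u H) \ below (coarsen (u * 2) H) := by
    rw [below_congr hw, below_congr (coarsen_congr hw _),
      coarsen_coarsen_of_dvd _ (dvd_mul_right u 2)]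
  refine mem_filter.mpr ⟨mem_image.mpr ⟨w, mem_univ _, hstrip⟩, ?_⟩
  exact (card_below_sdiff_le _ _).trans (sum_coarsen_sub_coarsen_mul_two_le hH hHs hu)

def topStrips (s : ℕ) : Finset (Finset (Fin s × Fin s)) :=
  univ.image fun r : Fin (s + 1) => below fun _ => r

theorem card_topStrips_le : (topStrips s).card ≤ s + 1 :=
  card_image_le.trans (by simp)

theorem below_const_mem_topStrips {r : ℕ} (hr : r ≤ s) : below (fun _ => r) ∈ topStrips s :=
  mem_image.mpr ⟨⟨r, Nat.lt_succ_of_le hr⟩, mem_univ _, rfl⟩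

def extendHeight (h : Fin s → ℕ) : ℕ → ℕ :=
  fun j => if hj : j < s then h ⟨j, hj⟩ else s

theorem extendHeight_le {h : Fin s → ℕ} (hle : ∀ j, h j ≤ s) (j : ℕ) :
    extendHeight h j ≤ s := by
  unfold extendHeight
  split_ifs
  exacts [hle _, le_rfl]

theorem monotone_extendHeight {h : Fin s → ℕ} (hmono : Monotone h) (hle : ∀ j, h j ≤ s) :
    Monotone (extendHeight h) := fun a b hab => by
  by_cases hb : b < s
  · simp only [extendHeight, hb, hab.trans_lt hb, dite_true]
    exact hmono (Fin.mk_le_mk.mpr hab)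
  · simpa [extendHeight, hb] using extendHeight_le hle a

theorem pathDeviation_le {ω : Fin s × Fin s → ℕ × ℕ} {L : ℕ} (hL : s ≤ 2 ^ L) {t : ℝ}
    (hlevel : ∀ ℓ < L, ∀ R ∈ levelStrips s (2 ^ ℓ), (deviation R ω : ℝ) ≤ t)
    (htop : ∀ R ∈ topStrips s, (deviation R ω : ℝ) ≤ t)
    {h : Fin s → ℕ} (hmono : Monotone h) (hle : ∀ j, h j ≤ s) :
    (pathDeviation ω h : ℝ) ≤ (L + 1) * t := by
  set H := extendHeight h
  have hH : Monotone H := monotone_extendHeight hmono hle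
  have hHs : ∀ j, H j ≤ s := extendHeight_le hle
  have hcoarsest : below (coarsen (2 ^ L) H) = below (s := s) fun _ => H 0 :=
    below_congr fun j hj => coarsen_of_lt H (hj.trans_le hL)
  rw [pathDeviation_eq_deviation_below ω h (H := H) fun j => dif_pos j.isLt,
    deviation_below_eq_sum hH ω L, hcoarsest]
  push_cast
  calc _ ≤ ∑ ℓ ∈ range L, t + t := by
        gcongr with ℓ hℓ
        · exact hlevel ℓ (mem_range.mp hℓ) _ (mem_levelStrips hH hHs (by positivity))
        · exact htop _ (below_const_mem_topStrips (hHs 0))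
    _ = (L + 1) * t := by
        rw [sum_const, card_range, nsmul_eq_mul]
        ring

end Paths

theorem one_half_lt_log {s : ℕ} (hs : 2 ≤ s) : 1 / 2 < log s :=
  (lt_trans (by norm_num) log_two_gt_d9).trans_le (log_le_log two_pos (by exact_mod_cast hs))

theorem log_add_one_le_two_mul_log {s : ℕ} (hs : 2 ≤ s) : log (s + 1) ≤ 2 * log s := by
  have h2 : (2 : ℝ) ≤ s := by exact_mod_cast hs
  calc log (s + 1) ≤ log ((s : ℝ) ^ 2) := log_le_log (by positivity) (by nlinarith)
    _ = 2 * log s := by rw [log_pow, Nat.cast_ofNat]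

theorem strip_entropy_bounds {s u k : ℕ} {c D : ℝ} (hs : 2 ≤ s) (hc : 0 ≤ c) (hu : 0 < u)
    (hus : u ≤ s) (huk : u * k ≤ s) (hD : D = (k + 1) * log (s + 1) + (2 * c + 2) * log s) :
    0 < D ∧ D ≤ (2 * c + 6) * s * log s
      ∧ ((u * s : ℕ) : ℝ) * D ≤ ((2 * c + 6) * s * log s) ^ 2 := by
  have ha := one_half_lt_log hs
  have hl := log_add_one_le_two_mul_log hs
  have hl₀ : 0 ≤ log ((s : ℝ) + 1) := log_nonneg (le_add_of_nonneg_left s.cast_nonneg)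
  have hs' : (2 : ℝ) ≤ s := by exact_mod_cast hs
  have hu' : (1 : ℝ) ≤ u := by exact_mod_cast hu
  have hus' : (u : ℝ) ≤ s := by exact_mod_cast hus
  have huk' : (u : ℝ) * k ≤ s := by exact_mod_cast huk
  have hk' : (k : ℝ) ≤ s := le_trans (le_mul_of_one_le_left k.cast_nonneg hu') huk'
  have hDle : D ≤ (k + 1) * (2 * log s) + (2 * c + 2) * log s := by
    rw [hD]; gcongr
  refine ⟨by rw [hD]; positivity, ?_, ?_⟩
  · calc D ≤ (k + 1) * (2 * log s) + (2 * c + 2) * log s := hDle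
      _ ≤ (s + 1) * (2 * log s) + (2 * c + 2) * log s := by gcongr
      _ = (2 * s + 2 * c + 4) * log s := by ring
      _ ≤ (2 * c + 6) * s * log s := by
        have : 0 ≤ (2 * c + 4) * (s - 1) * log s := by
          have : (0 : ℝ) ≤ s - 1 := by linarith
          positivity
        linarith
  push_cast
  calc (u : ℝ) * s * D ≤ u * s * ((k + 1) * (2 * log s) + (2 * c + 2) * log s) := by gcongr
    _ = 2 * log s * s * (u * k + u) + (2 * c + 2) * log s * s * u := by ring
    _ ≤ 2 * log s * s * (s + s) + (2 * c + 2) * log s * s * s := by gcongr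
    _ = 1 * ((2 * c + 6) * s ^ 2 * log s) := by ring
    _ ≤ ((2 * c + 6) * log s) * ((2 * c + 6) * s ^ 2 * log s) := by gcongr; nlinarith
    _ = ((2 * c + 6) * s * log s) ^ 2 := by ring

theorem levels_mul_threshold_le {s : ℕ} {c : ℝ} (hs : 2 ≤ s) (hc : 0 ≤ c) :
    ((Nat.log 2 s + 1 : ℕ) + 1 : ℝ) * (3 * ((2 * c + 6) * s * log s))
      ≤ 9 * (c + 3) * s * log ((s : ℝ) ^ 2) ^ 2 := by
  have ha := one_half_lt_log hs
  have hlog : (Nat.log 2 s : ℝ) ≤ 2 * log s := by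
    refine (Real.natLog_le_logb s 2).trans ?_
    rw [← log_div_log, Nat.cast_ofNat, div_le_iff₀ (log_pos one_lt_two)]
    nlinarith [log_two_gt_d9, (log_pos (by exact_mod_cast hs : (1:ℝ) < s))]
  rw [log_pow]
  push_cast
  have : (Nat.log 2 s : ℝ) + 1 + 1 ≤ 6 * log s := by linarith
  calc ((Nat.log 2 s : ℝ) + 1 + 1) * (3 * ((2 * c + 6) * s * log s))
      ≤ 6 * log s * (3 * ((2 * c + 6) * s * log s)) := by gcongr
    _ = 9 * (c + 3) * s * (2 * log s) ^ 2 := by ring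

theorem levels_mul_exp_le {s : ℕ} {c : ℝ} (hs : 2 ≤ s) (hc : 0 ≤ c) :
    ((Nat.log 2 s + 1 : ℕ) + 1 : ℝ) * exp (-((2 * c + 2) * log s))
      ≤ 9 * (c + 3) * ((s : ℝ) ^ 2) ^ (-c) := by
  have hs₀ : (0 : ℝ) < s := by positivity
  have hL : ((Nat.log 2 s + 1 : ℕ) + 1 : ℝ) ≤ (s : ℝ) ^ 2 := by
    have := Nat.log_lt_self 2 (by omega : s ≠ 0)
    have h2 : (2 : ℝ) ≤ s := by exact_mod_cast hs
    have : ((Nat.log 2 s + 1 : ℕ) : ℝ) ≤ s := by exact_mod_cast this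
    nlinarith
  have hrpow : ((s : ℝ) ^ 2) ^ (-c) = (s : ℝ) ^ 2 * exp (-((2 * c + 2) * log s)) := by
    rw [rpow_def_of_pos (by positivity), log_pow, ← exp_log (by positivity : (0 : ℝ) < s ^ 2),
      log_pow, ← exp_add]
    push_cast
    ring_nf
  calc _ ≤ (s : ℝ) ^ 2 * exp (-((2 * c + 2) * log s)) := by gcongr
    _ = 1 * ((s : ℝ) ^ 2) ^ (-c) := by rw [hrpow, one_mul]
    _ ≤ _ := by gcongr; linarith

section Probability

variable {s : ℕ} {c : ℝ}

theorem dotLaw_exists_strip_le (hs : 2 ≤ s) (hc : 0 ≤ c)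
    (𝓡 : Finset (Finset (Fin s × Fin s))) {u k : ℕ} (hu : 0 < u) (hus : u ≤ s)
    (huk : u * k ≤ s) (hcard : 𝓡.card ≤ (s + 1) ^ (k + 1))
    (harea : ∀ R ∈ 𝓡, R.card ≤ u * s) :
    (dotLaw _).toOuterMeasure {ω | ∃ R ∈ 𝓡, 3 * ((2 * c + 6) * s * log s) < deviation R ω}
      ≤ ENNReal.ofReal (exp (-((2 * c + 2) * log s))) := by
  obtain ⟨hD, hDb, hmD⟩ := strip_entropy_bounds hs hc hu hus huk rfl
  refine (dotLaw_exists_three_mul_lt_deviation_le 𝓡 harea hD hDb hmD).trans ?_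
  have hentropy : (((s + 1) ^ (k + 1) : ℕ) : ℝ) = exp ((k + 1) * log (s + 1)) := by
    rw [← exp_log (by positivity : (0 : ℝ) < ((s + 1) ^ (k + 1) : ℕ))]
    push_cast
    rw [log_pow]
    push_cast
    rfl
  calc (𝓡.card : ℝ≥0∞)
        * ENNReal.ofReal (exp (-((k + 1) * log (s + 1) + (2 * c + 2) * log s)))
      ≤ ((s + 1) ^ (k + 1) : ℕ) * ENNReal.ofReal (exp (-((k + 1) * log (s + 1)
          + (2 * c + 2) * log s))) := by
        gcongr
    _ = ENNReal.ofReal (exp (-((2 * c + 2) * log s))) := by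
        rw [← ENNReal.ofReal_natCast, ← ENNReal.ofReal_mul (by positivity), hentropy,
          ← exp_add]
        ring_nf

theorem dotLaw_strip_exceedance_le (hs : 2 ≤ s) (hc : 0 ≤ c) :
    (dotLaw _).toOuterMeasure {ω |
        (∃ ℓ ∈ range (Nat.log 2 s + 1), ∃ R ∈ levelStrips s (2 ^ ℓ),
          3 * ((2 * c + 6) * s * log s) < deviation R ω)
        ∨ ∃ R ∈ topStrips s, 3 * ((2 * c + 6) * s * log s) < deviation R ω}
      ≤ ENNReal.ofReal (((Nat.log 2 s + 1 : ℕ) + 1) * exp (-((2 * c + 2) * log s))) := by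
  have hlevel : ∀ ℓ ∈ range (Nat.log 2 s + 1), (dotLaw _).toOuterMeasure
      {ω | ∃ R ∈ levelStrips s (2 ^ ℓ), 3 * ((2 * c + 6) * s * log s) < deviation R ω}
        ≤ ENNReal.ofReal (exp (-((2 * c + 2) * log s))) := by
    intro ℓ hℓ
    have hℓs : 2 ^ ℓ ≤ s :=
      (Nat.pow_le_pow_right two_pos (Nat.lt_succ_iff.mp (mem_range.mp hℓ))).trans
        (Nat.pow_log_le_self 2 (by omega))
    exact dotLaw_exists_strip_le hs hc _ (by positivity) hℓs (Nat.mul_div_le s _)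
      (card_levelStrips_le _) fun R hR => (mem_filter.mp hR).2
  have htop := dotLaw_exists_strip_le hs hc (topStrips s) (u := s) (k := 0) (by omega) le_rfl
    (by simp) (by simpa using card_topStrips_le) fun R _ => by simpa using card_le_univ R
  calc _ ≤ (dotLaw _).toOuterMeasure (⋃ ℓ ∈ range (Nat.log 2 s + 1),
          {ω | ∃ R ∈ levelStrips s (2 ^ ℓ), 3 * ((2 * c + 6) * s * log s) < deviation R ω})
        + (dotLaw _).toOuterMeasure
          {ω | ∃ R ∈ topStrips s, 3 * ((2 * c + 6) * s * log s) < deviation R ω} := by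
        refine (measure_mono fun ω hω => ?_).trans (measure_union_le _ _)
        simpa using hω
    _ ≤ ∑ ℓ ∈ range (Nat.log 2 s + 1), ENNReal.ofReal (exp (-((2 * c + 2) * log s)))
        + ENNReal.ofReal (exp (-((2 * c + 2) * log s))) :=
        add_le_add ((measure_biUnion_finset_le _ _).trans (sum_le_sum hlevel)) htop
    _ = _ := by
        rw [sum_const, card_range, nsmul_eq_mul, ← ENNReal.ofReal_natCast,
          ← ENNReal.ofReal_mul (by positivity),
          ← ENNReal.ofReal_add (by positivity) (by positivity)]
        ring_nf

end Probability

theorem gridPMF_eq_prod_measureReal {s : ℕ} (ω : Fin s × Fin s → ℕ × ℕ) :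
    gridPMF ω
      = ∏ c, (poissonMeasure 1).real {(ω c).1} * (poissonMeasure 1).real {(ω c).2} := by
  simp only [poissonMeasure_real_singleton]
  rfl

theorem dotLaw_apply_eq_ofReal_gridPMF {s : ℕ} (ω : Fin s × Fin s → ℕ × ℕ) :
    dotLaw _ ω = ENNReal.ofReal (gridPMF ω) := by
  rw [gridPMF_eq_prod_measureReal, ENNReal.ofReal_prod_of_nonneg fun _ _ => by positivity]
  simp [dotLaw, cellLaw_apply, ENNReal.ofReal_mul measureReal_nonneg]

theorem one_sub_le_tsum_gridPMF {s : ℕ} (E : (Fin s × Fin s → ℕ × ℕ) → Prop) {ε : ℝ}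
    (hε : 0 ≤ ε) (hbad : (dotLaw _).toOuterMeasure {ω | ¬ E ω} ≤ ENNReal.ofReal ε) :
    1 - ε ≤ ∑' ω, if E ω then gridPMF ω else 0 := by
  have hgood : (∑' ω, if E ω then gridPMF ω else 0)
      = ((dotLaw _).toOuterMeasure {ω | E ω}).toReal := by
    rw [PMF.toOuterMeasure_apply, ENNReal.tsum_toReal_eq fun ω =>
      ne_top_of_le_ne_top ((dotLaw _).apply_ne_top ω) (Set.indicator_le_self _ _ ω)]
    refine tsum_congr fun ω => ?_
    by_cases hω : E ω
    · rw [if_pos hω, Set.indicator_of_mem (show ω ∈ {ω | E ω} from hω),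
        dotLaw_apply_eq_ofReal_gridPMF, ENNReal.toReal_ofReal]
      rw [gridPMF_eq_prod_measureReal]
      positivity
    · simp [hω]
  have htotal := (dotLaw (Fin s × Fin s)).toOuterMeasure_add_compl {ω | E ω}
  have hbad' : ((dotLaw _).toOuterMeasure {ω | E ω}ᶜ).toReal ≤ ε :=
    ENNReal.toReal_le_of_le_ofReal hε hbad
  have := congrArg ENNReal.toReal htotal
  rw [ENNReal.toReal_add (ne_top_of_le_ne_top ENNReal.one_ne_top (le_self_add.trans_eq htotal))
    (ne_top_of_le_ne_top ENNReal.one_ne_top (le_add_self.trans_eq htotal)),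
    ENNReal.toReal_one] at this
  linarith

/-- In a `√μ × √μ` grid (`s = √μ`, `μ = s²`) with independent
`Pois(1)` blue and red dots per cell, with probability `1 - 1/poly(μ)` every monotone
lattice path through the grid has blue-red deviation at most `O(√μ log² μ)`. -/
theorem stmt9 (c : ℝ) (hc : 0 < c) :
    ∃ C : ℝ, 0 < C ∧
      ∀ (s : ℕ), 2 ≤ s →
      (∑' ω : Fin s × Fin s → ℕ × ℕ,
          if (∀ h : Fin s → ℕ, Monotone h → (∀ j, h j ≤ s) →
              (pathDeviation ω h : ℝ) ≤ C * s * (Real.log ((s : ℝ) ^ 2)) ^ 2)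
            then gridPMF ω else 0)
        ≥ 1 - C * ((s : ℝ) ^ 2) ^ (-c) := by
  refine ⟨9 * (c + 3), by positivity, fun s hs => ?_⟩
  refine one_sub_le_tsum_gridPMF _ (by positivity) ((measure_mono fun ω hω => ?_).trans
    ((dotLaw_strip_exceedance_le hs hc.le).trans
      (ENNReal.ofReal_le_ofReal (levels_mul_exp_le hs hc.le))))
  by_contra hgood
  simp only [Set.mem_ofPred_eq, not_or, not_exists, not_and, not_lt, mem_range] at hω hgood
  exact hω fun h hmono hle => (pathDeviation_le (Nat.lt_pow_succ_log_self one_lt_two s).le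
    hgood.1 hgood.2 hmono hle).trans (levels_mul_threshold_le hs hc.le)
end

section
/- In the recursive path construction on a $\sqrt{\mu} \times \sqrt{\mu}$ grid where each subproblem of side $k > 1$ independently 'successfully terminates' with probability at least $p = \Omega(1/\sqrt{\log \mu})$ (and otherwise recurses into two subproblems of side $k/2$), the expected number of failed leaves (subproblems reaching side $1$) is at most $\sqrt{\mu} \cdot (1-p)^{\log_2 \sqrt{\mu} - 1} = o(\sqrt{\mu})$, and hence with probability $1 - o(1)$ the number of failed leaves is less than $\sqrt{\mu}/2$. -/
open scoped Classical

/-- In a binary recursion tree of depth `d` over `s = 2^d` leaves, the ancestor of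
leaf `ℓ` at level `i` is represented by its leftmost descendant leaf. -/
def ancestorRep {d s : ℕ} (ℓ : Fin s) (i : Fin d) : Fin s :=
  ⟨(ℓ : ℕ) - (ℓ : ℕ) % 2 ^ (d - (i : ℕ)), Nat.lt_of_le_of_lt (Nat.sub_le _ _) ℓ.isLt⟩

/-- Probability of an outcome `ω` when each node `(level, leftmost leaf)` of the tree
independently succeeds (`true`) with probability `q node`. -/
noncomputable def treeP {d s : ℕ} (q : Fin d × Fin s → ℝ)
    (ω : Fin d × Fin s → Bool) : ℝ :=
  ∏ node : Fin d × Fin s, if ω node then q node else 1 - q node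

/-- The failed leaves of outcome `ω`: leaves all of whose `d - 1` proper ancestors
(at levels `0, …, d-2`) failed to successfully terminate. -/
noncomputable def failedLeaves {d s : ℕ} (ω : Fin d × Fin s → Bool) : Finset (Fin s) :=
  Finset.univ.filter (fun ℓ =>
    ∀ i : Fin d, (i : ℕ) < d - 1 → ω (i, ancestorRep ℓ i) = false)

/-!
A leaf fails exactly when all of its `d - 1` proper ancestors fail, and these are `d - 1`
distinct nodes of the tree, each failing independently with probability at most `1 - p`.
So each leaf fails with probability at most `(1 - p)^(d-1)`, and linearity of expectation
over the `s` leaves bounds the expected number of failed leaves. Markov's inequality at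
threshold `s / 2` gives the second bound.
-/

open Finset

section Bernoulli

variable {α : Type*} [Fintype α]

theorem prod_bernoulli_nonneg {q : α → ℝ} (hq : ∀ a, 0 ≤ q a ∧ q a ≤ 1) (ω : α → Bool) :
    0 ≤ ∏ a, (if ω a then q a else 1 - q a) :=
  prod_nonneg fun a _ => by split_ifs <;> linarith [hq a]

variable [DecidableEq α]

theorem sum_prod_bernoulli_filter_forall_false (q : α → ℝ) (S : Finset α) :
    ∑ ω : α → Bool with ∀ a ∈ S, ω a = false, ∏ a, (if ω a then q a else 1 - q a)
      = ∏ a ∈ S, (1 - q a) := by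
  -- the indicator of `∀ a ∈ S, ω a = false` factors over the coordinates of `ω`
  set g : α → Bool → ℝ := fun a b => if a ∈ S ∧ b then 0 else if b then q a else 1 - q a
  have hfactor : ∀ ω : α → Bool, (if ∀ a ∈ S, ω a = false then
      ∏ a, (if ω a then q a else 1 - q a) else 0) = ∏ a, g a (ω a) := by
    intro ω
    split_ifs with h
    · exact prod_congr rfl fun a _ => by grind
    · obtain ⟨a, haS, hωa⟩ : ∃ a ∈ S, ω a = true := by simpa using h
      exact (prod_eq_zero (mem_univ a) (by simp [g, haS, hωa])).symm
  rw [sum_filter, Fintype.sum_congr _ _ hfactor, ← Fintype.prod_sum]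
  calc ∏ a, ∑ b, g a b = ∏ a, if a ∈ S then 1 - q a else 1 :=
        prod_congr rfl fun a _ => by by_cases ha : a ∈ S <;> simp [g, ha]
    _ = ∏ a ∈ S, (1 - q a) := by rw [prod_ite_mem, univ_inter]

theorem sum_prod_bernoulli_mul_card_filter_forall_false {ι : Type*} [Fintype ι] (q : α → ℝ)
    (S : ι → Finset α) :
    ∑ ω : α → Bool, (∏ a, if ω a then q a else 1 - q a) * #{ℓ | ∀ a ∈ S ℓ, ω a = false}
      = ∑ ℓ, ∏ a ∈ S ℓ, (1 - q a) := by
  simp_rw [card_filter, Nat.cast_sum, mul_sum, Nat.cast_ite, Nat.cast_one, Nat.cast_zero,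
    mul_boole]
  rw [sum_comm]
  exact sum_congr rfl fun ℓ _ => by rw [← sum_filter, sum_prod_bernoulli_filter_forall_false]

end Bernoulli

theorem prod_one_sub_le_pow_card {α : Type*} {S : Finset α} {q : α → ℝ} {p : ℝ}
    (hq : ∀ a ∈ S, p ≤ q a ∧ q a ≤ 1) : ∏ a ∈ S, (1 - q a) ≤ (1 - p) ^ #S := by
  rw [← prod_const]
  exact prod_le_prod (fun a ha => by linarith [hq a ha]) fun a ha => by linarith [hq a ha]

theorem sum_ite_le_le_sum_mul_div {Ω : Type*} [Fintype Ω] {w X : Ω → ℝ} (hw : ∀ ω, 0 ≤ w ω)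
    (hX : ∀ ω, 0 ≤ X ω) {t : ℝ} (ht : 0 < t) :
    ∑ ω, (if t ≤ X ω then w ω else 0) ≤ (∑ ω, w ω * X ω) / t := by
  rw [sum_div]
  refine sum_le_sum fun ω _ => ?_
  split_ifs with h
  · rw [le_div_iff₀ ht]
    exact mul_le_mul_of_nonneg_left h (hw ω)
  · exact div_nonneg (mul_nonneg (hw ω) (hX ω)) ht.le

def ancestorNodes {d s : ℕ} (ℓ : Fin s) : Finset (Fin d × Fin s) :=
  (univ.filter fun i : Fin d => (i : ℕ) < d - 1).image fun i => (i, ancestorRep ℓ i)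

theorem card_ancestorNodes {d s : ℕ} (ℓ : Fin s) : #(ancestorNodes (d := d) ℓ) = d - 1 := by
  rw [ancestorNodes, card_image_of_injective _ fun i j h => (Prod.ext_iff.mp h).1,
    Fin.card_filter_val_lt]
  omega

theorem failedLeaves_eq_filter_ancestorNodes {d s : ℕ} (ω : Fin d × Fin s → Bool) :
    failedLeaves ω = ({ℓ | ∀ a ∈ ancestorNodes ℓ, ω a = false} : Finset (Fin s)) := by
  ext ℓ
  simp [failedLeaves, ancestorNodes]

theorem stmt11_general (d : ℕ) (s : ℕ) (hs : s = 2 ^ d)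
    (p : ℝ) (hp0 : 0 < p)
    (q : Fin d × Fin s → ℝ) (hq : ∀ node, p ≤ q node ∧ q node ≤ 1) :
    (∑ ω : Fin d × Fin s → Bool, treeP q ω * ((failedLeaves ω).card : ℝ))
        ≤ (s : ℝ) * (1 - p) ^ (d - 1)
    ∧ (∑ ω : Fin d × Fin s → Bool,
          if (s : ℝ) / 2 ≤ ((failedLeaves ω).card : ℝ) then treeP q ω else 0)
        ≤ 2 * (1 - p) ^ (d - 1) := by
  have hexpected : ∑ ω : Fin d × Fin s → Bool, treeP q ω * ((failedLeaves ω).card : ℝ)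
      ≤ s * (1 - p) ^ (d - 1) :=
    calc ∑ ω : Fin d × Fin s → Bool, treeP q ω * ((failedLeaves ω).card : ℝ)
        = ∑ ℓ : Fin s, ∏ a ∈ ancestorNodes ℓ, (1 - q a) := by
          simp_rw [failedLeaves_eq_filter_ancestorNodes]
          exact sum_prod_bernoulli_mul_card_filter_forall_false q ancestorNodes
      _ ≤ ∑ _ℓ : Fin s, (1 - p) ^ (d - 1) := sum_le_sum fun ℓ _ =>
          (prod_one_sub_le_pow_card fun a _ => hq a).trans_eq (by rw [card_ancestorNodes])
      _ = s * (1 - p) ^ (d - 1) := by simp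
  refine ⟨hexpected, ?_⟩
  have hs0 : (0 : ℝ) < s := by rw [hs]; positivity
  calc (∑ ω : Fin d × Fin s → Bool,
          if (s : ℝ) / 2 ≤ ((failedLeaves ω).card : ℝ) then treeP q ω else 0)
      ≤ (∑ ω : Fin d × Fin s → Bool, treeP q ω * ((failedLeaves ω).card : ℝ)) / (s / 2) :=
        sum_ite_le_le_sum_mul_div
          (prod_bernoulli_nonneg fun a => ⟨hp0.le.trans (hq a).1, (hq a).2⟩)
          (fun ω => Nat.cast_nonneg _) (half_pos hs0)
    _ ≤ s * (1 - p) ^ (d - 1) / (s / 2) := by gcongr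
    _ = 2 * (1 - p) ^ (d - 1) := by field_simp [hs0.ne']

/-- In the recursive path construction on a `√μ × √μ` grid
(`√μ = s = 2^d`), where each subproblem of side `> 1` independently successfully
terminates with probability at least `p`, the expected number of failed leaves is at
most `s (1-p)^{d-1}` (which is `o(s)` when `p = Ω(1/√(log μ))`), and by Markov the
probability that at least `s/2` leaves fail is at most `2 (1-p)^{d-1}`; hence with
probability `1 - o(1)` fewer than `√μ/2` leaves fail. -/
theorem stmt11 (d : ℕ) (hd : 1 ≤ d) (s : ℕ) (hs : s = 2 ^ d)
    (p : ℝ) (hp0 : 0 < p) (hp1 : p ≤ 1)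
    (q : Fin d × Fin s → ℝ) (hq : ∀ node, p ≤ q node ∧ q node ≤ 1) :
    (∑ ω : Fin d × Fin s → Bool, treeP q ω * ((failedLeaves ω).card : ℝ))
        ≤ (s : ℝ) * (1 - p) ^ (d - 1)
    ∧ (∑ ω : Fin d × Fin s → Bool,
          if (s : ℝ) / 2 ≤ ((failedLeaves ω).card : ℝ) then treeP q ω else 0)
        ≤ 2 * (1 - p) ^ (d - 1) :=
  stmt11_general d s hs p hp0 q hq
end

section
/- In an ordered linear probing hash table, if there exists an interval $P = [r, s-1]$ with insertion surplus $q$, then the crossing number satisfies $c_s \ge q$. -/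
open scoped Classical

/-- An operation on an ordered linear probing hash table: insertion or deletion of
a key with the given hash. -/
inductive LPOp
  | ins (h : ℕ)
  | del (h : ℕ)

def LPOp.hash : LPOp → ℕ
  | .ins h => h
  | .del h => h

def LPOp.isIns : LPOp → Prop
  | .ins _ => True
  | .del _ => False

/-- The peak of an insertion with hash `h` given the multiset `a` of currently
available resources (hashes of unused tombstones and positions of unused free
slots): in ordered linear probing the insertion uses the smallest available
resource of value at least `h`. -/
noncomputable def LPpeak (a : Multiset ℕ) (h : ℕ) : ℕ :=
  sInf {v | v ∈ a ∧ h ≤ v}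

/-- The trace of `(hash, peak)` pairs of the insertions of an operation sequence,
starting from the multiset `a` of initially free slot positions: a deletion adds a
tombstone resource at its hash, and an insertion consumes the resource given by its
peak. -/
noncomputable def LPtrace : Multiset ℕ → List LPOp → List (ℕ × ℕ)
  | _, [] => []
  | a, .del h :: rest => LPtrace (h ::ₘ a) rest
  | a, .ins h :: rest => (h, LPpeak a h) :: LPtrace (a.erase (LPpeak a h)) rest

/-- The run is valid: every insertion finds an available resource of value at least
its hash (the table never overflows). -/
def LPValid : Multiset ℕ → List LPOp → Prop
  | _, [] => True
  | a, .del h :: rest => LPValid (h ::ₘ a) rest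
  | a, .ins h :: rest => (∃ v ∈ a, h ≤ v) ∧ LPValid (a.erase (LPpeak a h)) rest

/-- The crossing number `c_s`: the number of insertions with hash `< s` whose peak is
`≥ s` (i.e. that use a tombstone of hash `≥ s` or a free slot in position `≥ s`). -/
noncomputable def LPcrossing (F : Multiset ℕ) (ops : List LPOp) (s : ℕ) : ℕ :=
  ((LPtrace F ops).filter (fun hp => decide (hp.1 < s ∧ s ≤ hp.2))).length

/-- The operation at index `i` (junk deletion if out of range). -/
def opAt (ops : List LPOp) (i : ℕ) : LPOp := ops.getD i (.del 0)

/-- `A` is a downward-closed set of indices of operations hashing into `[r, s-1]`: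
together with any operation `u` it contains every earlier operation `v` hashing into
`[r, s-1]` with `hash v ≥ hash u`. -/
def DownClosed (ops : List LPOp) (r s : ℕ) (A : Finset ℕ) : Prop :=
  (∀ i ∈ A, i < ops.length ∧ r ≤ (opAt ops i).hash ∧ (opAt ops i).hash < s) ∧
  (∀ i ∈ A, ∀ j < i, j < ops.length →
    r ≤ (opAt ops j).hash → (opAt ops j).hash < s →
    (opAt ops i).hash ≤ (opAt ops j).hash → j ∈ A)

/-- `max(0, #insertions − #deletions)` over an index set `A` (truncated ℕ
subtraction implements the `max` with `0`). -/
noncomputable def subsetSurplus (ops : List LPOp) (A : Finset ℕ) : ℕ :=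
  (A.filter (fun i => (opAt ops i).isIns)).card -
    (A.filter (fun i => ¬ (opAt ops i).isIns)).card

/-- The insertion surplus of the interval `P = [r, s-1]`: the maximum insertion
surplus of a downward-closed subset of the operations hashing into `P`, minus the
number of free slots initially in `P`. -/
noncomputable def intervalSurplus (F : Multiset ℕ) (ops : List LPOp) (r s : ℕ) : ℤ :=
  ((((Finset.range ops.length).powerset.filter (DownClosed ops r s)).sup
      (subsetSurplus ops) : ℕ) : ℤ)
    - ((F.filter (fun v => r ≤ v ∧ v < s)).card : ℤ)

/-!
Mark the operations of a downward-closed set `S'` and scan the run from the left, keeping a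
lower end `t` (initially `r`) below the hashes of all remaining marked insertions, and counting
the available resources (free slots and tombstones) in `[t, s)`. A marked insertion has peak
`≥ s`, contributing to `c_s`, or consumes one of these resources; a marked deletion creates at
most one. An unmarked deletion with hash `h ∈ [t, s)` is followed only by marked insertions of
hash `> h`, by downward closure, so `t` is raised to `h + 1` and its tombstone is never counted.
Hence `#ins − #del ≤ c_s + #(free slots in [r, s))`.
-/

def LPOp.weight : LPOp → ℤ
  | .ins _ => 1
  | .del _ => -1

lemma LPOp.weight_eq_ite (op : LPOp) : op.weight = if op.isIns then 1 else -1 := by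
  cases op <;> simp [LPOp.weight, LPOp.isIns]

lemma opAt_cons_zero (op : LPOp) (rest : List LPOp) : opAt (op :: rest) 0 = op := rfl

lemma opAt_cons_succ (op : LPOp) (rest : List LPOp) (i : ℕ) :
    opAt (op :: rest) (i + 1) = opAt rest i := rfl

lemma LPpeak_spec {a : Multiset ℕ} {h : ℕ} (hex : ∃ v ∈ a, h ≤ v) :
    LPpeak a h ∈ a ∧ h ≤ LPpeak a h :=
  Nat.sInf_mem (s := {v | v ∈ a ∧ h ≤ v}) (by simpa [Set.Nonempty] using hex)

lemma LPcrossing_del (a : Multiset ℕ) (h : ℕ) (rest : List LPOp) (s : ℕ) :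
    LPcrossing a (.del h :: rest) s = LPcrossing (h ::ₘ a) rest s := by
  simp [LPcrossing, LPtrace]

lemma LPcrossing_ins (a : Multiset ℕ) (h : ℕ) (rest : List LPOp) (s : ℕ) :
    LPcrossing a (.ins h :: rest) s
      = LPcrossing (a.erase (LPpeak a h)) rest s + if h < s ∧ s ≤ LPpeak a h then 1 else 0 := by
  by_cases hc : h < s ∧ s ≤ LPpeak a h <;> simp [LPcrossing, LPtrace, hc]

noncomputable def markedNet (ops : List LPOp) (M : ℕ → Prop) : ℤ :=
  ∑ i ∈ Finset.range ops.length, if M i then (opAt ops i).weight else 0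

lemma markedNet_nil (M : ℕ → Prop) : markedNet [] M = 0 := rfl

lemma markedNet_cons (op : LPOp) (rest : List LPOp) (M : ℕ → Prop) :
    markedNet (op :: rest) M
      = markedNet rest (fun i => M (i + 1)) + if M 0 then op.weight else 0 := by
  simp only [markedNet, List.length_cons, Finset.sum_range_succ', opAt_cons_succ, opAt_cons_zero]

lemma subsetSurplus_eq_max {ops : List LPOp} {A : Finset ℕ} (hA : A ⊆ Finset.range ops.length) :
    (subsetSurplus ops A : ℤ) = max (markedNet ops (· ∈ A)) 0 := by
  have hnet : markedNet ops (· ∈ A) = ((A.filter fun i => (opAt ops i).isIns).card : ℤ)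
      - (A.filter fun i => ¬ (opAt ops i).isIns).card := by
    simp [markedNet, LPOp.weight_eq_ite, Finset.sum_ite, sub_eq_add_neg,
      Finset.inter_eq_right.mpr hA]
  rw [hnet, subsetSurplus]
  omega

lemma Multiset.countP_le_countP_of_imp {α : Type*} {p q : α → Prop} [DecidablePred p]
    [DecidablePred q] (s : Multiset α) (h : ∀ x, p x → q x) : s.countP p ≤ s.countP q := by
  simp only [Multiset.countP_eq_card_filter]
  exact Multiset.card_le_card (s.monotone_filter_right h)

/-- Only the marked insertions are constrained, so that `t` can be raised past an unmarked
deletion: later marked insertions must hash above it. -/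
def DownClosedFrom (ops : List LPOp) (M : ℕ → Prop) (t s : ℕ) : Prop :=
  ∀ i, M i → (opAt ops i).isIns → t ≤ (opAt ops i).hash ∧ (opAt ops i).hash < s ∧
    ∀ j < i, t ≤ (opAt ops j).hash → (opAt ops j).hash < s →
      (opAt ops i).hash ≤ (opAt ops j).hash → M j

namespace DownClosedFrom

variable {op : LPOp} {rest : List LPOp} {M : ℕ → Prop} {t s : ℕ}

lemma tail (hM : DownClosedFrom (op :: rest) M t s) :
    DownClosedFrom rest (fun i => M (i + 1)) t s := by
  intro i hi hins
  obtain ⟨hti, his, hclosed⟩ := hM (i + 1) hi hins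
  exact ⟨hti, his, fun j hj => hclosed (j + 1) (by omega)⟩

lemma tail_of_unmarked_del {h : ℕ} (hM : DownClosedFrom (.del h :: rest) M t s) (h0 : ¬ M 0)
    (hth : t ≤ h) (hhs : h < s) : DownClosedFrom rest (fun i => M (i + 1)) (h + 1) s := by
  intro i hi hins
  obtain ⟨-, his, hclosed⟩ := hM (i + 1) hi hins
  have hlt : h < (opAt rest i).hash := by
    by_contra! hle
    exact h0 (hclosed 0 (by omega) hth hhs hle)
  refine ⟨hlt, his, fun j hj hj₁ hj₂ hij => hclosed (j + 1) (by omega) ?_ hj₂ hij⟩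
  show t ≤ (opAt rest j).hash
  omega

end DownClosedFrom

lemma DownClosed.downClosedFrom {ops : List LPOp} {r s : ℕ} {A : Finset ℕ}
    (hA : DownClosed ops r s A) : DownClosedFrom ops (· ∈ A) r s := by
  intro i hi _
  obtain ⟨hlen, hri, his⟩ := hA.1 i hi
  exact ⟨hri, his, fun j hj => hA.2 i hi j hj (by omega)⟩

theorem markedNet_le_crossing_add_countP {s t : ℕ} {ops : List LPOp} {a : Multiset ℕ}
    {M : ℕ → Prop} (hvalid : LPValid a ops) (hM : DownClosedFrom ops M t s) :
    markedNet ops M ≤ LPcrossing a ops s + a.countP (fun v => t ≤ v ∧ v < s) := by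
  induction ops generalizing a M t with
  | nil => rw [markedNet_nil]; positivity
  | cons op rest ih =>
    rw [markedNet_cons]
    cases op with
    | del h =>
      rw [LPcrossing_del]
      have hcount := Multiset.countP_cons (fun v => t ≤ v ∧ v < s) h a
      by_cases h0 : M 0
      · have hrest := ih hvalid hM.tail
        simp only [h0, if_true, LPOp.weight]
        split_ifs at hcount <;> omega
      · by_cases hP : t ≤ h ∧ h < s
        · have hrest := ih hvalid (hM.tail_of_unmarked_del h0 hP.1 hP.2)
          rw [Multiset.countP_cons_of_neg _ (by omega)] at hrest
          have hmono := a.countP_le_countP_of_imp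
            (p := fun v => h + 1 ≤ v ∧ v < s) (q := fun v => t ≤ v ∧ v < s) (by omega)
          simp only [h0, if_false]
          omega
        · have hrest := ih hvalid hM.tail
          rw [if_neg hP] at hcount
          simp only [h0, if_false]
          omega
    | ins h =>
      obtain ⟨hex, hvalid⟩ := hvalid
      obtain ⟨hpa, hhp⟩ := LPpeak_spec hex
      have hcount := Multiset.countP_cons (fun v => t ≤ v ∧ v < s) (LPpeak a h)
        (a.erase (LPpeak a h))
      rw [Multiset.cons_erase hpa] at hcount
      have hrest := ih hvalid hM.tail
      rw [LPcrossing_ins]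
      by_cases h0 : M 0
      · obtain ⟨hth, hhs, -⟩ : t ≤ h ∧ h < s ∧ _ := hM 0 h0 trivial
        simp only [h0, if_true, LPOp.weight]
        split_ifs at hcount ⊢ <;> omega
      · simp only [h0, if_false]
        split_ifs at hcount ⊢ <;> omega

theorem stmt14_general (F : Multiset ℕ) (ops : List LPOp) (hvalid : LPValid F ops)
    (r s : ℕ) (q : ℤ) (hq : intervalSurplus F ops r s = q) :
    q ≤ (LPcrossing F ops s : ℤ) := by
  subst hq
  have hsup : ((((Finset.range ops.length).powerset.filter (DownClosed ops r s)).sup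
      (subsetSurplus ops) : ℕ) : ℤ)
        ≤ LPcrossing F ops s + F.countP (fun v => r ≤ v ∧ v < s) := by
    rw [← Nat.cast_add, Nat.cast_le]
    refine Finset.sup_le fun A hA => (Nat.cast_le (α := ℤ)).mp ?_
    obtain ⟨hsub, hdown⟩ := Finset.mem_filter.mp hA
    have hnet := markedNet_le_crossing_add_countP hvalid hdown.downClosedFrom
    rw [Nat.cast_add, subsetSurplus_eq_max (Finset.mem_powerset.mp hsub)]
    exact max_le hnet (by positivity)
  rw [intervalSurplus, ← Multiset.countP_eq_card_filter]
  linarith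

/-- If there exists an interval `P = [r, s-1]` with insertion
surplus `q`, then the crossing number satisfies `c_s ≥ q`. -/
theorem stmt14 (F : Multiset ℕ) (ops : List LPOp) (hvalid : LPValid F ops)
    (r s : ℕ) (hrs : r < s) (q : ℤ) (hq : intervalSurplus F ops r s = q) :
    q ≤ (LPcrossing F ops s : ℤ) :=
  stmt14_general F ops hvalid r s q hq
end

section
/- Consider an ordered linear-probing hash table with $n$ slots containing $(1-1/x)n$ elements with i.i.d. uniform hashes and no tombstones. For any query, its running time $T$ satisfies $\Pr[T \ge kx] \le 2^{-\Omega(k)}$ for all $k \ge 1$. -/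
open scoped Classical

/-- Linear probing placement: a key with hash `h` lands in the first free position
at or after `h`. -/
noncomputable def placePos (occ : Finset ℕ) (h : ℕ) : ℕ :=
  sInf {p | h ≤ p ∧ p ∉ occ}

/-- The set of occupied positions after linear-probing insertions of a list of
hashes. -/
noncomputable def occAfter : List ℕ → Finset ℕ
  | [] => ∅
  | h :: rest => insert (placePos (occAfter rest) h) (occAfter rest)

/-- Running time of a query hashing to position `q` in an ordered linear-probing
table: the scan starting at `q` examines precisely the elements residing in
positions `≥ q` whose hash is `≤ q`, plus one final slot. Since every element
resides at a position at least its hash, this count equals the number of occupied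
positions `≥ q` minus the number of elements with hash `> q`. -/
noncomputable def queryTime {m n : ℕ} (ω : Fin m → Fin n) (q : ℕ) : ℕ :=
  1 + (((occAfter (List.ofFn fun u => (ω u : ℕ))).filter (fun p => q ≤ p)).card -
    (Finset.univ.filter (fun u : Fin m => q < (ω u : ℕ))).card)

/-!
A query at `q` taking time `T` forces an interval `[i, q]` into which at least
`(q - i) + (T - 1)` keys hash. Let `E_t` be the set of tables in which some `[i, q]` receives
`q - i + t` hashes; then `n · #E_{t+1} ≤ m · #E_t`, so `Pr[E_t] ≤ (m/n)^t = (1 - 1/x)^t`, and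
`t = ⌈kx⌉ - 1 ≥ kx/2` turns this into `2^{-k/2}`.

The inequality between `E_{t+1}` and `E_t` is a switching argument. For `ω ∈ E_{t+1}` let `I` be
the leftmost overflowing start and give each key hashing into `[I, q]` the weight
`1 / (q - I + 1)`; there are at least `q - I + t + 1` such keys, so `ω` has weight at least `1`.
Re-hashing such a key `u` to any of the `n` cells gives a table in `E_t`. Conversely, for a table
`ω'` and a key `u`, the tables `ω'[u ↦ w]` obtained this way all have the same `I` and
`w ∈ [I, q]`, so together they carry weight at most `1`.
-/

open Finset Function

lemma List.countP_ofFn {α : Type*} {m : ℕ} (f : Fin m → α) (p : α → Prop)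
    [DecidablePred p] :
    (List.ofFn f).countP (p ·) = #{u | p (f u)} := by
  rw [← Multiset.coe_countP, ← Fin.univ_val_map, Multiset.countP_map, card_def, filter_val]

lemma Finset.card_filter_le_add_of_Ico_subset {s : Finset ℕ} {a b : ℕ} (hab : a ≤ b)
    (hs : Ico a b ⊆ s) : #{p ∈ s | b ≤ p} + (b - a) ≤ #{p ∈ s | a ≤ p} := by
  have hdisj : Disjoint {p ∈ s | b ≤ p} (Ico a b) :=
    disjoint_left.2 fun p hp hp' => by simp only [mem_filter, mem_Ico] at hp hp'; omega
  calc #{p ∈ s | b ≤ p} + (b - a) = #({p ∈ s | b ≤ p} ∪ Ico a b) := by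
        rw [card_union_of_disjoint hdisj, Nat.card_Ico]
    _ ≤ #{p ∈ s | a ≤ p} := card_le_card <| union_subset
        (fun p hp => by simp only [mem_filter] at hp ⊢; exact ⟨hp.1, hab.trans hp.2⟩)
        fun p hp => mem_filter.2 ⟨hs hp, (mem_Ico.1 hp).1⟩

lemma Fintype.sum_sum_update {ι β M : Type*} [Fintype ι] [DecidableEq ι] [Fintype β]
    [AddCommMonoid M] (f : (ι → β) → M) (i : ι) :
    ∑ g, ∑ b, f (update g i b) = Fintype.card β • ∑ g, f g := by
  let e : Equiv.Perm ((ι → β) × β) :=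
    Involutive.toPerm (fun p => (update p.1 i p.2, p.1 i)) fun p => by simp
  calc ∑ g, ∑ b, f (update g i b) = ∑ p : (ι → β) × β, f (e p).1 :=
        (Fintype.sum_prod_type' fun g b => f (update g i b)).symm
    _ = ∑ p : (ι → β) × β, f p.1 := Equiv.sum_comp e fun p => f p.1
    _ = Fintype.card β • ∑ g, f g := by
        rw [Fintype.sum_prod_type]
        simp [smul_sum]

lemma placePos_mem (occ : Finset ℕ) (h : ℕ) :
    placePos occ h ∈ {p | h ≤ p ∧ p ∉ occ} := by
  refine Nat.sInf_mem ⟨h + occ.sup id + 1, by omega, fun hp => ?_⟩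
  have := le_sup (f := id) hp
  simp only [id] at this
  omega

lemma mem_of_le_of_lt_placePos {occ : Finset ℕ} {h y : ℕ} (hy : h ≤ y)
    (hlt : y < placePos occ h) : y ∈ occ := by
  by_contra hy'
  exact (Nat.sInf_le (show y ∈ {p | h ≤ p ∧ p ∉ occ} from ⟨hy, hy'⟩)).not_gt hlt

/-- Take `i` to be the start of the run of occupied cells reaching `j`: no key hashes across
the free cell before it, so the keys stored from `i` on, which fill `[i, j)` and every occupied
cell beyond, all hash at or beyond `i`. -/
lemma exists_card_occAfter_add_le (L : List ℕ) (j : ℕ) :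
    ∃ i ≤ j, #{p ∈ occAfter L | j ≤ p} + j ≤ L.countP (i ≤ ·) + i := by
  induction L generalizing j with
  | nil => exact ⟨j, le_rfl, by simp [occAfter]⟩
  | cons h rest ih =>
    obtain ⟨-, hp⟩ := placePos_mem (occAfter rest) h
    rcases lt_or_ge (placePos (occAfter rest) h) j with hpj | hjp
    · obtain ⟨i, hij, hi⟩ := ih j
      refine ⟨i, hij, ?_⟩
      rw [occAfter, filter_insert, if_neg (by omega), List.countP_cons]
      omega
    · obtain ⟨i, hij, hi⟩ := ih (min h j)
      have hfull : Ico (min h j) j ⊆ occAfter rest := fun y hy => by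
        rw [mem_Ico] at hy
        exact mem_of_le_of_lt_placePos (h := h) (by omega) (by omega)
      have hshift := card_filter_le_add_of_Ico_subset (min_le_right h j) hfull
      refine ⟨i, by omega, ?_⟩
      rw [occAfter, filter_insert, if_pos hjp,
        card_insert_of_notMem fun hmem => hp (mem_filter.1 hmem).1, List.countP_cons,
        if_pos (by simp only [decide_eq_true_eq]; omega)]
      omega

section Overflow

variable {m n : ℕ}

def hashesIn (ω : Fin m → Fin n) (i j : ℕ) : ℕ := #{u | i ≤ ω u ∧ (ω u : ℕ) ≤ j}

lemma exists_le_hashesIn_of_queryTime (ω : Fin m → Fin n) (q : ℕ) :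
    ∃ i ≤ q, q - i + (queryTime ω q - 1) ≤ hashesIn ω i q := by
  obtain ⟨i, hiq, hi⟩ := exists_card_occAfter_add_le (List.ofFn fun u => (ω u : ℕ)) q
  have hsplit : #{u | i ≤ (ω u : ℕ)} = hashesIn ω i q + #{u | q < (ω u : ℕ)} := by
    simp only [hashesIn, card_filter, ← sum_add_distrib]
    exact sum_congr rfl fun u _ => by split_ifs <;> omega
  rw [List.countP_ofFn] at hi
  by_cases hT : queryTime ω q ≤ 1
  · exact ⟨q, le_rfl, by omega⟩
  refine ⟨i, hiq, ?_⟩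
  unfold queryTime at hT ⊢
  omega

def overflowStarts (ω : Fin m → Fin n) (q t : ℕ) : Set ℕ :=
  {i | i ≤ q ∧ q - i + t ≤ hashesIn ω i q}

noncomputable def firstOverflow (ω : Fin m → Fin n) (q t : ℕ) : ℕ :=
  sInf (overflowStarts ω q t)

noncomputable def overflowEvent (n m q t : ℕ) : Finset (Fin m → Fin n) :=
  {ω | (overflowStarts ω q t).Nonempty}

lemma overflowStarts_anti (ω : Fin m → Fin n) (q : ℕ) : Antitone (overflowStarts ω q) :=
  fun _ _ hst _ hi => ⟨hi.1, by have := hi.2; omega⟩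

lemma hashesIn_update_add (ω : Fin m → Fin n) (u : Fin m) (w : Fin n) (i j : ℕ) :
    hashesIn (update ω u w) i j + (if i ≤ ω u ∧ (ω u : ℕ) ≤ j then 1 else 0) =
      hashesIn ω i j + (if i ≤ w ∧ (w : ℕ) ≤ j then 1 else 0) := by
  have split_at_u : ∀ σ : Fin m → Fin n, hashesIn σ i j =
      (if i ≤ σ u ∧ (σ u : ℕ) ≤ j then 1 else 0) +
        ∑ v ∈ univ.erase u, if i ≤ σ v ∧ (σ v : ℕ) ≤ j then 1 else 0 := fun σ => by
    rw [hashesIn, card_filter]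
    exact (add_sum_erase _ _ (mem_univ u)).symm
  rw [split_at_u, split_at_u ω, update_self,
    sum_congr rfl fun v hv => by rw [update_of_ne (ne_of_mem_erase hv)]]
  omega

lemma hashesIn_le_update_add_one (ω : Fin m → Fin n) (u : Fin m) (w : Fin n) (i j : ℕ) :
    hashesIn ω i j ≤ hashesIn (update ω u w) i j + 1 := by
  have := hashesIn_update_add ω u w i j
  split_ifs at this <;> omega

lemma overflowStarts_nonempty_of_update {ω : Fin m → Fin n} {u : Fin m} {w : Fin n} {q t : ℕ}
    (h : (overflowStarts (update ω u w) q (t + 1)).Nonempty) :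
    (overflowStarts ω q t).Nonempty := by
  obtain ⟨i, hiq, hi⟩ := h
  have := hashesIn_le_update_add_one (update ω u w) u (ω u) i q
  rw [update_idem, update_eq_self] at this
  exact ⟨i, hiq, by omega⟩

def InFirstOverflow (ω : Fin m → Fin n) (q t : ℕ) (u : Fin m) : Prop :=
  (overflowStarts ω q t).Nonempty ∧ firstOverflow ω q t ≤ ω u ∧ (ω u : ℕ) ≤ q

lemma firstOverflow_update_le {ω : Fin m → Fin n} {u : Fin m} {w₁ w₂ : Fin n} {q t : ℕ}
    (h₁ : InFirstOverflow (update ω u w₁) q t u)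
    (hw₂ : firstOverflow (update ω u w₁) q t ≤ w₂ ∧ (w₂ : ℕ) ≤ q) :
    firstOverflow (update ω u w₂) q t ≤ firstOverflow (update ω u w₁) q t := by
  obtain ⟨hne, hw₁⟩ := h₁
  set I := firstOverflow (update ω u w₁) q t
  obtain ⟨hIq, hI⟩ : I ∈ overflowStarts (update ω u w₁) q t := Nat.sInf_mem hne
  refine Nat.sInf_le ⟨hIq, ?_⟩
  have := hashesIn_update_add (update ω u w₁) u w₂ I q
  rw [update_idem, if_pos hw₁, if_pos hw₂] at this
  omega

lemma firstOverflow_update_eq {ω : Fin m → Fin n} {u : Fin m} {w₁ w₂ : Fin n} {q t : ℕ}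
    (h₁ : InFirstOverflow (update ω u w₁) q t u)
    (h₂ : InFirstOverflow (update ω u w₂) q t u) :
    firstOverflow (update ω u w₁) q t = firstOverflow (update ω u w₂) q t := by
  have hw₁ := h₁.2
  have hw₂ := h₂.2
  simp only [update_self] at hw₁ hw₂
  rcases le_total (firstOverflow (update ω u w₁) q t) (firstOverflow (update ω u w₂) q t)
    with h | h
  · exact le_antisymm h (firstOverflow_update_le h₁ ⟨h.trans hw₂.1, hw₂.2⟩)
  · exact le_antisymm (firstOverflow_update_le h₂ ⟨h.trans hw₁.1, hw₁.2⟩) h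

noncomputable def overflowWeight (ω : Fin m → Fin n) (q t : ℕ) (u : Fin m) : ℝ :=
  if InFirstOverflow ω q t u then ((q - firstOverflow ω q t + 1 : ℕ) : ℝ)⁻¹ else 0

lemma overflowWeight_nonneg (ω : Fin m → Fin n) (q t : ℕ) (u : Fin m) :
    0 ≤ overflowWeight ω q t u := by
  unfold overflowWeight
  positivity

lemma one_le_sum_overflowWeight {ω : Fin m → Fin n} {q t : ℕ}
    (hω : (overflowStarts ω q (t + 1)).Nonempty) :
    1 ≤ ∑ u, overflowWeight ω q (t + 1) u := by
  set I := firstOverflow ω q (t + 1)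
  obtain ⟨-, hI⟩ : I ∈ overflowStarts ω q (t + 1) := Nat.sInf_mem hω
  have hsum :
      ∑ u, overflowWeight ω q (t + 1) u = hashesIn ω I q * ((q - I + 1 : ℕ) : ℝ)⁻¹ := by
    simp only [overflowWeight, InFirstOverflow, hω, true_and]
    rw [← sum_filter, sum_const, nsmul_eq_mul]
    rfl
  rw [hsum, ← div_eq_mul_inv, one_le_div (by positivity)]
  exact_mod_cast (by omega : q - I + 1 ≤ hashesIn ω I q)

lemma sum_overflowWeight_update_le (ω : Fin m → Fin n) (u : Fin m) (q t : ℕ) :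
    ∑ w, overflowWeight (update ω u w) q (t + 1) u ≤
      if (overflowStarts ω q t).Nonempty then 1 else 0 := by
  by_cases hS : ∃ w₀, InFirstOverflow (update ω u w₀) q (t + 1) u
  swap
  · push Not at hS
    rw [sum_eq_zero fun w _ => by rw [overflowWeight, if_neg (hS w)]]
    split_ifs <;> norm_num
  obtain ⟨w₀, h₀⟩ := hS
  rw [if_pos (overflowStarts_nonempty_of_update h₀.1)]
  set I := firstOverflow (update ω u w₀) q (t + 1)
  have hIq : I ≤ q := (Nat.sInf_mem h₀.1).1
  have hfirst : ∀ w, InFirstOverflow (update ω u w) q (t + 1) u →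
      firstOverflow (update ω u w) q (t + 1) = I := fun w h => firstOverflow_update_eq h h₀
  have hcard : #{w | InFirstOverflow (update ω u w) q (t + 1) u} ≤ q - I + 1 := by
    calc #{w | InFirstOverflow (update ω u w) q (t + 1) u} ≤ #(Icc I q) :=
          card_le_card_of_injOn (fun w : Fin n => (w : ℕ)) (fun w hw => by
            have h := (mem_filter.1 (mem_coe.1 hw)).2
            have hle := h.2.1
            rw [update_self, hfirst w h] at hle
            exact mem_Icc.2 ⟨hle, by simpa using h.2.2⟩) Fin.val_injective.injOn
      _ = q - I + 1 := by rw [Nat.card_Icc]; omega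
  calc ∑ w, overflowWeight (update ω u w) q (t + 1) u
      = ∑ w, if InFirstOverflow (update ω u w) q (t + 1) u then ((q - I + 1 : ℕ) : ℝ)⁻¹
          else 0 :=
        sum_congr rfl fun w _ => by
          unfold overflowWeight
          split_ifs with h
          · rw [hfirst w h]
          · rfl
    _ = #{w | InFirstOverflow (update ω u w) q (t + 1) u} * ((q - I + 1 : ℕ) : ℝ)⁻¹ := by
        rw [← sum_filter, sum_const, nsmul_eq_mul]
    _ ≤ (q - I + 1 : ℕ) * ((q - I + 1 : ℕ) : ℝ)⁻¹ := by gcongr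
    _ = 1 := mul_inv_cancel₀ (by positivity)

lemma card_overflowEvent_succ_le (q t : ℕ) :
    (n : ℝ) * #(overflowEvent n m q (t + 1)) ≤ m * #(overflowEvent n m q t) := by
  calc (n : ℝ) * #(overflowEvent n m q (t + 1))
      = n * ∑ ω, if (overflowStarts ω q (t + 1)).Nonempty then (1 : ℝ) else 0 := by
        rw [overflowEvent, sum_boole]
    _ ≤ n * ∑ ω, ∑ u, overflowWeight ω q (t + 1) u := by
        gcongr with ω
        split_ifs with hω
        · exact one_le_sum_overflowWeight hω
        · exact sum_nonneg fun u _ => overflowWeight_nonneg ω q (t + 1) u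
    _ = ∑ u, ∑ ω, ∑ w, overflowWeight (update ω u w) q (t + 1) u := by
        rw [sum_comm, mul_sum]
        refine sum_congr rfl fun u _ => ?_
        rw [Fintype.sum_sum_update (fun ω => overflowWeight ω q (t + 1) u), Fintype.card_fin,
          nsmul_eq_mul]
    _ ≤ ∑ _u : Fin m, ∑ ω, if (overflowStarts ω q t).Nonempty then (1 : ℝ) else 0 := by
        gcongr with u _ ω
        exact sum_overflowWeight_update_le ω u q t
    _ = m * #(overflowEvent n m q t) := by
        rw [overflowEvent, sum_boole, sum_const, card_univ, Fintype.card_fin, nsmul_eq_mul]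

lemma card_overflowEvent_le (q t : ℕ) :
    (n : ℝ) ^ t * #(overflowEvent n m q t) ≤ m ^ t * n ^ m := by
  induction t with
  | zero =>
    rw [pow_zero, one_mul, pow_zero, one_mul]
    exact_mod_cast (card_le_univ (overflowEvent n m q 0)).trans_eq (by simp)
  | succ t ih =>
    calc (n : ℝ) ^ (t + 1) * #(overflowEvent n m q (t + 1))
        = n ^ t * (n * #(overflowEvent n m q (t + 1))) := by ring
      _ ≤ n ^ t * (m * #(overflowEvent n m q t)) :=
          mul_le_mul_of_nonneg_left (card_overflowEvent_succ_le q t) (by positivity)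
      _ = m * (n ^ t * #(overflowEvent n m q t)) := by ring
      _ ≤ m * (m ^ t * n ^ m) := by gcongr
      _ = m ^ (t + 1) * n ^ m := by ring

end Overflow

open Real in
lemma one_sub_inv_pow_ceil_sub_one_le {x k : ℝ} (hx : 1 < x) (hk : 1 ≤ k) :
    (1 - 1 / x) ^ (⌈k * x⌉₊ - 1) ≤ 2 ^ (-(1 / 2 * k)) := by
  set t := ⌈k * x⌉₊ - 1
  have hx0 : 0 < x := by linarith
  have hkx : 1 < k * x := by nlinarith
  have hceil : 1 < ⌈k * x⌉₊ := Nat.lt_ceil.2 (by exact_mod_cast hkx)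
  have hkxt : k * x ≤ 2 * t := by
    have ht : (t : ℝ) = ⌈k * x⌉₊ - 1 := by rw [Nat.cast_sub hceil.le, Nat.cast_one]
    have ht1 : (1 : ℝ) ≤ t := by exact_mod_cast (by omega : 1 ≤ t)
    linarith [Nat.le_ceil (k * x)]
  have hinv : 1 / x ≤ 1 := by rw [div_le_one hx0]; exact hx.le
  calc (1 - 1 / x) ^ t ≤ exp (-(1 / x)) ^ t :=
        pow_le_pow_left₀ (by linarith) (by linarith [add_one_le_exp (-(1 / x))]) t
    _ = exp (-(t / x)) := by rw [← exp_nat_mul]; ring_nf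
    _ ≤ exp (-(1 / 2 * k)) := exp_le_exp.2 <| by
        rw [neg_le_neg_iff, le_div_iff₀ hx0]; linarith
    _ ≤ 2 ^ (-(1 / 2 * k)) := by
        rw [rpow_def_of_pos two_pos]
        exact exp_le_exp.2 (by nlinarith [log_two_lt_d9])

/-- In an ordered linear-probing table with `n` slots containing
`m = (1-1/x)n` elements with i.i.d. uniform hashes and no tombstones, any query
(hashing to any position `q`) has running time `T` with
`Pr[T ≥ kx] ≤ 2^{-Ω(k)}` for all `k ≥ 1`. -/
theorem stmt16 :
    ∃ c : ℝ, 0 < c ∧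
      ∀ (n m : ℕ) (x k : ℝ) (q : ℕ), 0 < n → 1 < x → 1 ≤ k →
        ((m : ℝ) = (1 - 1 / x) * n) →
        ((Finset.univ.filter (fun ω : Fin m → Fin n =>
            k * x ≤ (queryTime ω q : ℝ))).card : ℝ)
          ≤ (2 : ℝ) ^ (-(c * k)) * (n : ℝ) ^ m := by
  refine ⟨1 / 2, by norm_num, fun n m x k q hn hx hk hm => ?_⟩
  set t := ⌈k * x⌉₊ - 1
  have hslow : univ.filter (fun ω : Fin m → Fin n => k * x ≤ (queryTime ω q : ℝ)) ⊆
      overflowEvent n m q t := by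
    intro ω hω
    have hT : ⌈k * x⌉₊ ≤ queryTime ω q := Nat.ceil_le.2 (mem_filter.1 hω).2
    obtain ⟨i, hiq, hi⟩ := exists_le_hashesIn_of_queryTime ω q
    exact mem_filter.2 ⟨mem_univ ω, i, overflowStarts_anti ω q (by omega) ⟨hiq, hi⟩⟩
  have hn' : (0 : ℝ) < n := by exact_mod_cast hn
  have hload : (m : ℝ) / n = 1 - 1 / x := by rw [hm]; field_simp
  calc (#(univ.filter fun ω : Fin m → Fin n => k * x ≤ (queryTime ω q : ℝ)) : ℝ)
      ≤ #(overflowEvent n m q t) := by exact_mod_cast card_le_card hslow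
    _ ≤ ((m : ℝ) / n) ^ t * n ^ m := by
        rw [div_pow, div_mul_eq_mul_div, le_div_iff₀ (by positivity), mul_comm]
        exact card_overflowEvent_le q t
    _ ≤ 2 ^ (-(1 / 2 * k)) * n ^ m := by
        rw [hload]
        gcongr
        exact one_sub_inv_pow_ceil_sub_one_le hx hk
end

section
/- Consider an ordered linear-probing hash table with $n$ slots containing $(1-1/x)n$ elements with i.i.d. uniform hashes and no tombstones. For any position $i$, let $T$ be the number of elements $u$ residing in positions $\ge i$ with hash $h(u) < i$. Then $\Pr[T \ge kx] \le 2^{-\Omega(k)}$ for all $k \ge 1$. -/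
/-
Suppose `T ≥ t = ⌈kx⌉`. Let `a` be one past the last free slot below `i`. An element is never placed
beyond a free slot, so the elements hashing below `a` fill exactly the occupied slots below `a`;
hence the full run `[a, i)` and the `T` crossed elements all hash into `[a, i)`, and some window
`[b - s, b)` with `b = min i n` receives at least `s + t` hashes.

For the windows `W s = [b - s, b)` and `δ = n / (2x)`, the product over the elements of
`1` (hash in `W s`) or `(n - s - δ) / (n - s)` (hash outside) is a martingale in `s` under
uniform hashing, starting at `(1 - δ/n)^m`. Where `W s` first receives `s + t` hashes it is at
least `(1 - δ/n)^(m - t)`, so optional stopping bounds the probability of ever getting there by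
`(1 - 1/(2x))^t ≤ 2^(-k/2)`.
-/

open scoped Classical

/-- The number of elements residing in positions `≥ i` whose hash is `< i`.
Since every element resides at a position at least its hash, this equals the number
of occupied positions `≥ i` minus the number of elements with hash `≥ i`
(an order-independent quantity). -/
noncomputable def crossCount {m n : ℕ} (ω : Fin m → Fin n) (i : ℕ) : ℕ :=
  ((occAfter (List.ofFn fun u => (ω u : ℕ))).filter (fun p => i ≤ p)).card -
    (Finset.univ.filter (fun u : Fin m => i ≤ (ω u : ℕ))).card

open Finset

lemma placePos_spec (occ : Finset ℕ) (h : ℕ) : h ≤ placePos occ h ∧ placePos occ h ∉ occ :=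
  Nat.sInf_mem ((Set.Ici_infinite h).sdiff occ.finite_toSet).nonempty

lemma placePos_le {occ : Finset ℕ} {h p : ℕ} (hp : h ≤ p) (hpo : p ∉ occ) : placePos occ h ≤ p :=
  Nat.sInf_le ⟨hp, hpo⟩

lemma card_occAfter (L : List ℕ) : #(occAfter L) = L.length := by
  induction L with
  | nil => simp [occAfter]
  | cons h rest ih => simp [occAfter, card_insert_of_notMem (placePos_spec _ h).2, ih]

/-- An element is never placed beyond a free slot at or after its hash. -/
lemma card_filter_lt_occAfter (L : List ℕ) {a : ℕ} (ha : a = 0 ∨ a - 1 ∉ occAfter L) :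
    #{p ∈ occAfter L | p < a} = L.countP (· < a) := by
  induction L with
  | nil => simp [occAfter]
  | cons h rest ih =>
    have hq := placePos_spec (occAfter rest) h
    have hq_lt : placePos (occAfter rest) h < a ↔ h < a := by
      refine ⟨hq.1.trans_lt, fun hha => ?_⟩
      have hfree : a - 1 ∉ occAfter (h :: rest) := ha.resolve_left (by omega)
      have hle : placePos (occAfter rest) h ≤ a - 1 :=
        placePos_le (by omega) fun hc => hfree (mem_insert_of_mem hc)
      have hne : placePos (occAfter rest) h ≠ a - 1 := fun he =>
        hfree (he ▸ mem_insert_self _ _)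
      omega
    rw [occAfter, filter_insert, List.countP_cons,
      ← ih (ha.imp_right fun h' hc => h' (mem_insert_of_mem hc))]
    by_cases hha : h < a
    · rw [if_pos (hq_lt.2 hha), card_insert_of_notMem fun hc => hq.2 (mem_filter.1 hc).1]
      simp [hha]
    · rw [if_neg (mt hq_lt.1 hha)]
      simp [hha]

lemma card_filter_le_occAfter_ofFn {m : ℕ} (f : Fin m → ℕ) {a : ℕ}
    (ha : a = 0 ∨ a - 1 ∉ occAfter (List.ofFn f)) :
    #{p ∈ occAfter (List.ofFn f) | a ≤ p} = #{u | a ≤ f u} := by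
  have hlt : #{p ∈ occAfter (List.ofFn f) | p < a} = #{u | f u < a} := by
    rw [card_filter_lt_occAfter _ ha, ← Multiset.coe_countP, ← Fin.univ_val_map,
      Multiset.countP_map]
    rfl
  have hocc := card_filter_add_card_filter_not (s := occAfter (List.ofFn f)) (· < a)
  have hhash := card_filter_add_card_filter_not (s := (univ : Finset (Fin m))) (f · < a)
  simp only [not_lt, card_occAfter, List.length_ofFn, card_univ, Fintype.card_fin] at hocc hhash
  omega

lemma exists_occupied_run_ending_at (occ : Finset ℕ) (i : ℕ) :
    ∃ a ≤ i, (∀ p ∈ Ico a i, p ∈ occ) ∧ (a = 0 ∨ a - 1 ∉ occ) := by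
  induction i with
  | zero => exact ⟨0, le_rfl, by simp, Or.inl rfl⟩
  | succ i ih =>
    by_cases hi : i ∈ occ
    · obtain ⟨a, hai, hrun, hfree⟩ := ih
      refine ⟨a, by omega, fun p hp => ?_, hfree⟩
      rcases eq_or_ne p i with rfl | hpi
      · exact hi
      · exact hrun p (by simp only [mem_Ico] at hp ⊢; omega)
    · exact ⟨i + 1, le_rfl, by simp, Or.inr hi⟩

lemma card_filter_le_eq_add_card_filter_Ico {β : Type*} (s : Finset β) (f : β → ℕ) {a i : ℕ}
    (hai : a ≤ i) : #{x ∈ s | a ≤ f x} = #{x ∈ s | i ≤ f x} + #{x ∈ s | f x ∈ Ico a i} := by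
  rw [← card_union_of_disjoint (disjoint_filter.2 fun x _ h h' => by rw [mem_Ico] at h'; omega)]
  congr 1
  ext x
  simp only [mem_filter, mem_union, mem_Ico, ← and_or_left]
  exact and_congr_right fun _ => by omega

def window (n b s : ℕ) : Finset (Fin n) := {v | b - s ≤ (v : ℕ) ∧ (v : ℕ) < b}

lemma window_mono (n b : ℕ) : Monotone (window n b) := fun s s' hss' v => by
  simp only [window, mem_filter, mem_univ, true_and]
  omega

lemma card_window {n b s : ℕ} (hb : b ≤ n) (hs : s ≤ b) : #(window n b s) = s := by
  have himage : (window n b s).image Fin.val = Ico (b - s) b := by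
    ext p
    simp only [window, mem_image, mem_filter, mem_univ, true_and, mem_Ico]
    exact ⟨by rintro ⟨v, hv, rfl⟩; exact hv, fun hp => ⟨⟨p, by omega⟩, hp, rfl⟩⟩
  rw [← card_image_of_injective _ Fin.val_injective, himage, Nat.card_Ico]
  omega

lemma exists_window_of_crossCount {m n : ℕ} (ω : Fin m → Fin n) (i : ℕ) :
    ∃ s ≤ min i n, s + crossCount ω i ≤ #{u | ω u ∈ window n (min i n) s} := by
  rcases Nat.eq_zero_or_pos (crossCount ω i) with h0 | hpos
  · exact ⟨0, Nat.zero_le _, by simp [h0]⟩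
  obtain ⟨a, hai, hrun, hfree⟩ :=
    exists_occupied_run_ending_at (occAfter (List.ofFn fun u => (ω u : ℕ))) i
  have hocc := card_filter_le_eq_add_card_filter_Ico
    (occAfter (List.ofFn fun u => (ω u : ℕ))) id hai
  simp only [id] at hocc
  have hhash := card_filter_le_eq_add_card_filter_Ico univ (fun u => (ω u : ℕ)) hai
  have hrun_card :
      #{p ∈ occAfter (List.ofFn fun u => (ω u : ℕ)) | p ∈ Ico a i} = i - a := by
    rw [← Nat.card_Ico, filter_mem_eq_inter, inter_eq_right.2 hrun]
  have hsub : ({u | (ω u : ℕ) ∈ Ico a i} : Finset (Fin m)) ⊆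
      ({u | ω u ∈ window n (min i n) (min i n - a)} : Finset (Fin m)) := by
    intro u
    simp only [window, mem_filter, mem_univ, true_and, mem_Ico]
    have := (ω u).isLt
    omega
  have hwindow := card_le_card hsub
  have heq := card_filter_le_occAfter_ofFn (fun u => (ω u : ℕ)) hfree
  refine ⟨min i n - a, by omega, ?_⟩
  unfold crossCount at *
  omega

lemma div_pow_succ_le_pred_div_pred_pow {D y : ℝ} (hD : 1 < D) (hDy : D ≤ y) {r : ℕ}
    (hr : (r : ℝ) ≤ D - 1) : (D / y) ^ (r + 1) ≤ ((D - 1) / (y - 1)) ^ r := by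
  have hy : 0 < y - 1 := by linarith
  have hy0 : y ≠ 0 := by linarith
  have hA : 0 < D * (y - 1) := by positivity
  obtain ⟨a, ha_def⟩ : ∃ a : ℝ, a = -((y - D) / (D * (y - 1))) := ⟨_, rfl⟩
  have hratio : (D - 1) / (y - 1) = D / y * (1 + a) := by
    rw [ha_def]
    field_simp
    ring
  have ha : -2 ≤ a := by
    have : (y - D) / (D * (y - 1)) ≤ 1 := (div_le_one hA).2 (by nlinarith)
    linarith
  -- `1 + r * a` is Bernoulli's lower bound for `(1 + a) ^ r`; it stays above `D / y`
  -- because `r * y ≤ D * (y - 1)`.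
  have hq : D / y ≤ 1 + r * a := by
    have hry : r * (y - D) / (D * (y - 1)) ≤ (y - D) / y := by
      rw [div_le_div_iff₀ hA (by linarith)]
      have : (r : ℝ) * y ≤ D * (y - 1) := by nlinarith
      nlinarith
    have : D / y = 1 - (y - D) / y := by field_simp; ring
    rw [this, ha_def, mul_neg, ← mul_div_assoc]
    linarith
  have hq0 : 0 ≤ (D / y) ^ r := pow_nonneg (div_nonneg (by linarith) (by linarith)) r
  calc (D / y) ^ (r + 1) = (D / y) ^ r * (D / y) := pow_succ _ _
    _ ≤ (D / y) ^ r * (1 + r * a) := mul_le_mul_of_nonneg_left hq hq0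
    _ ≤ (D / y) ^ r * (1 + a) ^ r := mul_le_mul_of_nonneg_left (one_add_mul_le_pow ha r) hq0
    _ = ((D - 1) / (y - 1)) ^ r := by rw [hratio, mul_pow]

/-- Chosen so that `(N - s) * decayFactor N δ s = 1 + (N - s - 1) * decayFactor N δ (s + 1)`:
a ball outside `W s` is uniform on the `N - s` remaining slots, so given where the balls in
`W s` lie, `martingale` has the same expectation at `s` and `s + 1`. -/
noncomputable def decayFactor (N : ℕ) (δ : ℝ) (s : ℕ) : ℝ := (N - s - δ) / (N - s)

lemma decayFactor_zero {N : ℕ} (hN : N ≠ 0) (δ : ℝ) : decayFactor N δ 0 = 1 - δ / N := by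
  simp only [decayFactor, Nat.cast_zero, sub_zero]
  field_simp

lemma decayFactor_pos {N s : ℕ} {δ : ℝ} (hδ : 0 ≤ δ) (hs : s + δ < N) : 0 < decayFactor N δ s :=
  div_pos (by linarith) (by linarith)

lemma decayFactor_le_one {N s : ℕ} {δ : ℝ} (hδ : 0 ≤ δ) (hs : s < N) : decayFactor N δ s ≤ 1 := by
  have : (s : ℝ) < N := by exact_mod_cast hs
  exact div_le_one_of_le₀ (by linarith) (by linarith)

lemma decayFactor_zero_pow_le {N m t : ℕ} {δ : ℝ} (hδ : 0 < δ) (hm : (m : ℝ) + 2 * δ ≤ N) :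
    ∀ s, s + t ≤ m → decayFactor N δ 0 ^ (m - t) ≤ decayFactor N δ s ^ (m - t - s)
  | 0, _ => le_rfl
  | s + 1, hs => by
    have hr : ((m - t - (s + 1) : ℕ) : ℝ) = m - t - s - 1 := by
      rw [Nat.cast_sub (by omega), Nat.cast_sub (by omega)]; push_cast; ring
    have hst : ((s + 1 + t : ℕ) : ℝ) ≤ m := by exact_mod_cast hs
    push_cast at hst
    have hstep := div_pow_succ_le_pred_div_pred_pow (D := N - s - δ) (y := N - s)
      (by linarith) (by linarith) (r := m - t - (s + 1)) (by rw [hr]; linarith)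
    have hsucc : decayFactor N δ (s + 1) = (N - s - δ - 1) / (N - s - 1) := by
      simp only [decayFactor]; push_cast; ring_nf
    rw [hsucc]
    calc decayFactor N δ 0 ^ (m - t) ≤ decayFactor N δ s ^ (m - t - s) :=
          decayFactor_zero_pow_le hδ hm s (by omega)
      _ = ((N - s - δ) / (N - s)) ^ (m - t - (s + 1) + 1) := by
          rw [decayFactor]; congr 1; omega
      _ ≤ _ := hstep

theorem sum_prod_eq_of_sum_fiber_eq {ι α β : Type*} [Fintype ι] [DecidableEq ι] [Fintype α]
    [Fintype β] [DecidableEq β] (κ : α → β)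
    {φ ψ : α → ℝ} (hfib : ∀ a, ∑ a' with κ a' = κ a, φ a' = ∑ a' with κ a' = κ a, ψ a')
    {G : Finset (ι → α)} (hG : ∀ ω ω', κ ∘ ω = κ ∘ ω' → (ω ∈ G ↔ ω' ∈ G)) :
    ∑ ω ∈ G, ∏ u, φ (ω u) = ∑ ω ∈ G, ∏ u, ψ (ω u) := by
  rw [← sum_fiberwise G (κ ∘ ·), ← sum_fiberwise G (κ ∘ ·)]
  refine sum_congr rfl fun p _ => ?_
  by_cases hp : ∃ ω₀ ∈ G, κ ∘ ω₀ = p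
  · obtain ⟨ω₀, hω₀, rfl⟩ := hp
    have hbox : {ω ∈ G | κ ∘ ω = κ ∘ ω₀} =
        Fintype.piFinset fun u => ({a | κ a = κ (ω₀ u)} : Finset α) := by
      ext ω
      simp only [mem_filter, Fintype.mem_piFinset, mem_univ, true_and, funext_iff,
        Function.comp]
      exact ⟨And.right, fun h => ⟨(hG ω ω₀ (funext h)).2 hω₀, h⟩⟩
    rw [hbox, ← prod_univ_sum, ← prod_univ_sum]
    exact prod_congr rfl fun u _ => hfib (ω₀ u)
  · push Not at hp
    simp [filter_false_of_mem hp]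

section MaximalInequality

variable {ι α : Type*} [Fintype ι] [DecidableEq α]

def hits (W : ℕ → Finset α) (s : ℕ) (ω : ι → α) : ℕ := #{u | ω u ∈ W s}

variable {W : ℕ → Finset α}

lemma hits_le (s : ℕ) (ω : ι → α) : hits W s ω ≤ Fintype.card ι :=
  card_filter_le _ _

lemma hits_eq_zero (h0 : W 0 = ∅) (ω : ι → α) : hits W 0 ω = 0 := by
  simp [hits, h0]

lemma hits_eq_of_agree (hW : Monotone W) {H s : ℕ} (hs : s ≤ H) {ω ω' : ι → α}
    (h : ∀ u, ω u ∈ W H ∨ ω' u ∈ W H → ω u = ω' u) : hits W s ω = hits W s ω' := by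
  unfold hits
  congr 1
  ext u
  simp only [mem_filter, mem_univ, true_and]
  exact ⟨fun hu => h u (.inl (hW hs hu)) ▸ hu, fun hu => (h u (.inr (hW hs hu))).symm ▸ hu⟩

variable [Fintype α]

noncomputable def ballWeight (W : ℕ → Finset α) (δ : ℝ) (s : ℕ) (a : α) : ℝ :=
  if a ∈ W s then 1 else decayFactor (Fintype.card α) δ s

noncomputable def martingale (W : ℕ → Finset α) (δ : ℝ) (s : ℕ) (ω : ι → α) : ℝ :=
  ∏ u, ballWeight W δ s (ω u)

lemma martingale_eq_pow (δ : ℝ) (s : ℕ) (ω : ι → α) :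
    martingale W δ s ω = decayFactor (Fintype.card α) δ s ^ (Fintype.card ι - hits W s ω) := by
  have hsplit := card_filter_add_card_filter_not (s := (univ : Finset ι)) (ω · ∈ W s)
  rw [card_univ] at hsplit
  simp only [martingale, ballWeight]
  rw [prod_ite, prod_const_one, one_mul, prod_const, hits]
  congr 1
  omega

lemma sum_compl_ballWeight_succ (hW : Monotone W) (δ : ℝ) {H : ℕ} (hH : #(W H) = H)
    (hH1 : #(W (H + 1)) = H + 1) (hHN : H + 1 < Fintype.card α) :
    ∑ a ∈ (W H)ᶜ, ballWeight W δ (H + 1) a = ∑ a ∈ (W H)ᶜ, ballWeight W δ H a := by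
  have hrest : {a ∈ (W H)ᶜ | a ∉ W (H + 1)} = (W (H + 1))ᶜ := by
    ext a
    simp only [mem_filter, mem_compl]
    exact ⟨And.right, fun ha => ⟨fun h => ha (hW H.le_succ h), ha⟩⟩
  have hnew : #{a ∈ (W H)ᶜ | a ∈ W (H + 1)} = 1 := by
    have := card_filter_add_card_filter_not (s := (W H)ᶜ) (· ∈ W (H + 1))
    rw [hrest, card_compl, card_compl, hH, hH1] at this
    omega
  have hN : ((Fintype.card α - (H + 1) : ℕ) : ℝ) = Fintype.card α - H - 1 := by
    rw [Nat.cast_sub hHN.le]; push_cast; ring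
  have hN' : ((Fintype.card α - H : ℕ) : ℝ) = Fintype.card α - H := by
    rw [Nat.cast_sub (by omega)]
  have hHN' : (H : ℝ) + 1 < Fintype.card α := by exact_mod_cast hHN
  have hne : (Fintype.card α : ℝ) - H - 1 ≠ 0 := by linarith
  have hne' : (Fintype.card α : ℝ) - H ≠ 0 := by linarith
  simp only [ballWeight]
  rw [sum_ite, sum_const, sum_const, hnew, hrest, card_compl, hH1,
    sum_congr rfl fun a ha => if_neg (mem_compl.1 ha), sum_const, card_compl, hH]
  simp only [nsmul_eq_mul, hN, hN', decayFactor]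
  push_cast
  rw [← sub_sub, mul_div_cancel₀ _ hne, mul_div_cancel₀ _ hne']
  ring

variable [DecidableEq ι]

def crossesAt (W : ℕ → Finset α) (t s : ℕ) : Finset (ι → α) :=
  {ω | s + t ≤ hits W s ω ∧ ∀ s' < s, hits W s' ω < s' + t}

def staysBelow (W : ℕ → Finset α) (t H : ℕ) : Finset (ι → α) :=
  {ω | ∀ s ≤ H, hits W s ω < s + t}

theorem sum_martingale_succ (hW : Monotone W) (δ : ℝ) {H : ℕ} (hH : #(W H) = H)
    (hH1 : #(W (H + 1)) = H + 1) (hHN : H + 1 < Fintype.card α) {G : Finset (ι → α)}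
    (hG : ∀ ω ω', (∀ u, ω u ∈ W H ∨ ω' u ∈ W H → ω u = ω' u) → (ω ∈ G ↔ ω' ∈ G)) :
    ∑ ω ∈ G, martingale W δ (H + 1) ω = ∑ ω ∈ G, martingale W δ H ω := by
  let κ : α → Option α := fun a => if a ∈ W H then some a else none
  have hκ : ∀ a a', κ a' = κ a ↔ (a ∈ W H ∨ a' ∈ W H → a' = a) := by
    intro a a'
    by_cases ha : a ∈ W H <;> by_cases ha' : a' ∈ W H <;> simp [κ, ha, ha'] <;> grind
  refine sum_prod_eq_of_sum_fiber_eq κ (fun a => ?_) fun ω ω' h => hG ω ω' fun u hu =>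
    ((hκ (ω' u) (ω u)).1 (congrFun h u) hu.symm)
  by_cases ha : a ∈ W H
  · have hfib : ({a' | κ a' = κ a} : Finset α) = {a} := by
      ext a'
      simp only [mem_filter, mem_univ, true_and, mem_singleton, hκ]
      exact ⟨fun h => h (.inl ha), fun h _ => h⟩
    simp [hfib, ballWeight, ha, hW H.le_succ ha]
  · have hfib : ({a' | κ a' = κ a} : Finset α) = (W H)ᶜ := by
      ext a'
      simp only [mem_filter, mem_univ, true_and, mem_compl, hκ, ha, false_or]
      exact ⟨fun h h' => ha (h h' ▸ h'), fun h h' => absurd h' h⟩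
    rw [hfib, sum_compl_ballWeight_succ hW δ hH hH1 hHN]

lemma sum_staysBelow_eq (F : (ι → α) → ℝ) (t H : ℕ) :
    ∑ ω ∈ staysBelow W t H, F ω =
      (∑ ω ∈ crossesAt W t (H + 1), F ω) + ∑ ω ∈ staysBelow W t (H + 1), F ω := by
  rw [← sum_filter_add_sum_filter_not (staysBelow W t H) fun ω => H + 1 + t ≤ hits W (H + 1) ω]
  congr 2 <;> ext ω <;> simp only [staysBelow, crossesAt, mem_filter, mem_univ, true_and]
  · exact ⟨fun ⟨h, h'⟩ => ⟨h', fun s hs => h s (by omega)⟩,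
      fun ⟨h, h'⟩ => ⟨fun s hs => h' s (by omega), h⟩⟩
  · refine ⟨fun ⟨h, h'⟩ s hs => ?_, fun h => ⟨fun s hs => h s (by omega), ?_⟩⟩
    · rcases Nat.lt_or_eq_of_le hs with hs | rfl
      exacts [h s (by omega), by omega]
    · have := h (H + 1) le_rfl
      omega

/-- Optional stopping for `martingale`, stopped when `hits W s` first reaches `s + t`. -/
theorem sum_crossesAt_add_sum_staysBelow (hW : Monotone W) (δ : ℝ) {t : ℕ} (ht : 1 ≤ t) :
    ∀ {H : ℕ}, (∀ s ≤ H, #(W s) = s) → H < Fintype.card α →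
      (∑ s ∈ Icc 1 H, ∑ ω ∈ (crossesAt W t s : Finset (ι → α)), martingale W δ s ω) +
        ∑ ω ∈ (staysBelow W t H : Finset (ι → α)), martingale W δ H ω =
      ((Fintype.card α : ℝ) - δ) ^ Fintype.card ι
  | 0, hcard, hN => by
    have h0 : W 0 = ∅ := card_eq_zero.1 (hcard 0 le_rfl)
    have hstay : staysBelow W t 0 = (univ : Finset (ι → α)) :=
      filter_true_of_mem fun ω _ s hs => by
        rw [Nat.le_zero.1 hs, hits_eq_zero h0]; omega
    have hN0 : (Fintype.card α : ℝ) ≠ 0 := by exact_mod_cast hN.ne'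
    simp only [Icc_eq_empty_of_lt zero_lt_one, sum_empty, zero_add, hstay, martingale,
      ballWeight, h0, notMem_empty, if_false, sum_const, card_univ, nsmul_eq_mul, decayFactor,
      Nat.cast_zero, sub_zero, prod_const, Fintype.card_fun, Nat.cast_pow]
    rw [← mul_pow, mul_div_cancel₀ _ hN0]
  | H + 1, hcard, hN => by
    have hstaysBelow : ∀ ω ω' : ι → α, (∀ u, ω u ∈ W H ∨ ω' u ∈ W H → ω u = ω' u) →
        (ω ∈ staysBelow W t H ↔ ω' ∈ staysBelow W t H) := by
      intro ω ω' h
      simp only [staysBelow, mem_filter, mem_univ, true_and]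
      exact forall₂_congr fun s hs => by rw [hits_eq_of_agree hW hs h]
    rw [sum_Icc_succ_top (by omega), add_assoc, ← sum_staysBelow_eq,
      sum_martingale_succ hW δ (hcard H H.le_succ) (hcard (H + 1) le_rfl) hN hstaysBelow]
    exact sum_crossesAt_add_sum_staysBelow hW δ ht (fun s hs => hcard s (by omega)) (by omega)

lemma card_exists_le_sum_card_crossesAt (h0 : W 0 = ∅) (b : ℕ) {t : ℕ} (ht : 1 ≤ t) :
    #{ω : ι → α | ∃ s ≤ b, s + t ≤ hits W s ω} ≤
      ∑ s ∈ Icc 1 (min b (Fintype.card ι - t)), #(crossesAt W t s : Finset (ι → α)) := by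
  refine (card_le_card fun ω hω => ?_).trans card_biUnion_le
  simp only [mem_filter, mem_univ, true_and] at hω
  obtain ⟨s, hsb, hs⟩ := hω
  have hP : ∃ s, s + t ≤ hits W s ω := ⟨s, hs⟩
  have hfirst := Nat.find_spec hP
  have hpos : 1 ≤ Nat.find hP := by
    by_contra h
    rw [Nat.lt_one_iff.1 (not_le.1 h), hits_eq_zero h0] at hfirst
    omega
  have hle_card := hits_le (W := W) (Nat.find hP) ω
  have hmin := Nat.find_min' hP hs
  refine mem_biUnion.2 ⟨Nat.find hP, mem_Icc.2 ⟨hpos, le_min (by omega) (by omega)⟩, ?_⟩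
  simp only [crossesAt, mem_filter, mem_univ, true_and]
  exact ⟨hfirst, fun s' hs' => not_le.1 (Nat.find_min hP hs')⟩

lemma decayFactor_zero_pow_le_martingale {δ : ℝ} (hδ : 0 < δ)
    (hm : (Fintype.card ι : ℝ) + 2 * δ ≤ Fintype.card α) {t s : ℕ} {ω : ι → α}
    (hω : ω ∈ crossesAt W t s) :
    decayFactor (Fintype.card α) δ 0 ^ (Fintype.card ι - t) ≤ martingale W δ s ω := by
  simp only [crossesAt, mem_filter, mem_univ, true_and] at hω
  have hle := hits_le (W := W) s ω
  have hsm : (s : ℝ) ≤ Fintype.card ι := by exact_mod_cast (by omega : s ≤ Fintype.card ι)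
  have hs : (s : ℝ) + δ < Fintype.card α := by linarith
  have hsN : s < Fintype.card α := by exact_mod_cast (show (s : ℝ) < Fintype.card α by linarith)
  rw [martingale_eq_pow]
  calc _ ≤ decayFactor (Fintype.card α) δ s ^ (Fintype.card ι - t - s) :=
        decayFactor_zero_pow_le hδ hm s (by omega)
    _ ≤ _ :=
      pow_le_pow_of_le_one (decayFactor_pos hδ.le hs).le (decayFactor_le_one hδ.le hsN) (by omega)

lemma sum_card_crossesAt_mul_le (hW : Monotone W) {H : ℕ} (hcard : ∀ s ≤ H, #(W s) = s)
    {δ : ℝ} (hδ : 0 < δ) (hm : (Fintype.card ι : ℝ) + 2 * δ ≤ Fintype.card α) {t : ℕ}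
    (ht : 1 ≤ t) (hHt : H + t ≤ Fintype.card ι) :
    (∑ s ∈ Icc 1 H, (#(crossesAt W t s : Finset (ι → α)) : ℝ)) *
        decayFactor (Fintype.card α) δ 0 ^ (Fintype.card ι - t) ≤
      ((Fintype.card α : ℝ) - δ) ^ Fintype.card ι := by
  have hHm : (H : ℝ) ≤ Fintype.card ι := by exact_mod_cast (by omega : H ≤ Fintype.card ι)
  have hH : H < Fintype.card α := by
    exact_mod_cast (show (H : ℝ) < Fintype.card α by linarith)
  have hcross : (∑ s ∈ Icc 1 H, (#(crossesAt W t s : Finset (ι → α)) : ℝ)) *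
        decayFactor (Fintype.card α) δ 0 ^ (Fintype.card ι - t) ≤
      ∑ s ∈ Icc 1 H, ∑ ω ∈ (crossesAt W t s : Finset (ι → α)), martingale W δ s ω := by
    rw [sum_mul]
    refine sum_le_sum fun s _ => ?_
    rw [← nsmul_eq_mul]
    exact card_nsmul_le_sum _ _ _ fun ω hω => decayFactor_zero_pow_le_martingale hδ hm hω
  have hrest : 0 ≤ ∑ ω ∈ (staysBelow W t H : Finset (ι → α)), martingale W δ H ω :=
    sum_nonneg fun ω _ => by
      rw [martingale_eq_pow]
      exact pow_nonneg (decayFactor_pos hδ.le (by linarith)).le _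
  linarith [sum_crossesAt_add_sum_staysBelow (ι := ι) hW δ ht hcard hH]

theorem card_exists_hits_ge_le (hW : Monotone W) {b : ℕ} (hcard : ∀ s ≤ b, #(W s) = s)
    {δ : ℝ} (hδ : 0 < δ) (hm : (Fintype.card ι : ℝ) + 2 * δ ≤ Fintype.card α) {t : ℕ}
    (ht : 1 ≤ t) :
    (#{ω : ι → α | ∃ s ≤ b, s + t ≤ hits W s ω} : ℝ) ≤
      (1 - δ / Fintype.card α) ^ t * (Fintype.card α : ℝ) ^ Fintype.card ι := by
  set m := Fintype.card ι
  set N := Fintype.card α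
  have hN : (0 : ℝ) < N := by linarith [m.cast_nonneg (α := ℝ)]
  have hf0 : decayFactor N δ 0 = 1 - δ / N := decayFactor_zero (by exact_mod_cast hN.ne') δ
  have hf0pos : 0 < decayFactor N δ 0 := decayFactor_pos hδ.le (by push_cast; linarith)
  rw [← hf0]
  rcases lt_or_ge m t with hmt | htm
  · have hempty : #{ω : ι → α | ∃ s ≤ b, s + t ≤ hits W s ω} = 0 :=
      card_eq_zero.2 <| filter_false_of_mem fun ω _ ⟨s, _, hs⟩ => by
        have := hits_le (W := W) s ω
        omega
    rw [hempty, Nat.cast_zero]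
    positivity
  have hcover := card_exists_le_sum_card_crossesAt (ι := ι) (card_eq_zero.1 (hcard 0 b.zero_le))
    b ht
  have hstop := sum_card_crossesAt_mul_le (ι := ι) hW (H := min b (m - t))
    (fun s hs => hcard s (hs.trans (min_le_left _ _))) hδ hm ht (by omega)
  have htotal : ((N : ℝ) - δ) ^ m =
      decayFactor N δ 0 ^ t * N ^ m * decayFactor N δ 0 ^ (m - t) := by
    rw [mul_right_comm, ← pow_add, Nat.add_sub_cancel' htm, ← mul_pow, hf0]
    congr 1
    field_simp
  refine le_of_mul_le_mul_right ?_ (pow_pos hf0pos (m - t))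
  calc (#{ω : ι → α | ∃ s ≤ b, s + t ≤ hits W s ω} : ℝ) * decayFactor N δ 0 ^ (m - t)
      ≤ (∑ s ∈ Icc 1 (min b (m - t)), (#(crossesAt W t s : Finset (ι → α)) : ℝ)) *
          decayFactor N δ 0 ^ (m - t) := by
        gcongr
        exact_mod_cast hcover
    _ ≤ ((N : ℝ) - δ) ^ m := hstop
    _ = _ := htotal

end MaximalInequality

lemma one_sub_pow_le_two_rpow_neg {θ k : ℝ} {t : ℕ} (hθ : θ ≤ 1) (hk : 0 ≤ k)
    (hkt : k ≤ θ * t) : (1 - θ) ^ t ≤ (2 : ℝ) ^ (-k) := by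
  have hlog : Real.log 2 ≤ 1 := by
    linarith [Real.log_le_sub_one_of_pos (zero_lt_two : (0 : ℝ) < 2)]
  calc (1 - θ) ^ t ≤ Real.exp (-θ) ^ t :=
        pow_le_pow_left₀ (by linarith) (by linarith [Real.add_one_le_exp (-θ)]) t
    _ = Real.exp (-(θ * t)) := by rw [← Real.exp_nat_mul]; ring_nf
    _ ≤ Real.exp (Real.log 2 * -k) := Real.exp_le_exp.2 (by nlinarith)
    _ = (2 : ℝ) ^ (-k) := (Real.rpow_def_of_pos two_pos _).symm

/-- In an ordered linear-probing table with `n` slots containing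
`m = (1-1/x)n` elements with i.i.d. uniform hashes and no tombstones, for any
position `i`, the number `T` of elements residing in positions `≥ i` with hash `< i`
satisfies `Pr[T ≥ kx] ≤ 2^{-Ω(k)}` for all `k ≥ 1`. -/
theorem stmt17 :
    ∃ c : ℝ, 0 < c ∧
      ∀ (n m : ℕ) (x k : ℝ) (i : ℕ), 0 < n → 1 < x → 1 ≤ k →
        ((m : ℝ) = (1 - 1 / x) * n) →
        ((Finset.univ.filter (fun ω : Fin m → Fin n =>
            k * x ≤ (crossCount ω i : ℝ))).card : ℝ)
          ≤ (2 : ℝ) ^ (-(c * k)) * (n : ℝ) ^ m := by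
  refine ⟨1 / 2, one_half_pos, fun n m x k i hn hx hk hm => ?_⟩
  have hx0 : 0 < x := by linarith
  have hn' : (0 : ℝ) < n := by exact_mod_cast hn
  set t := ⌈k * x⌉₊
  have hkt : k * x ≤ t := Nat.le_ceil _
  have hevent : ({ω | k * x ≤ (crossCount ω i : ℝ)} : Finset (Fin m → Fin n)) ⊆
      ({ω | ∃ s ≤ min i n, s + t ≤ hits (window n (min i n)) s ω} : Finset (Fin m → Fin n)) :=
    fun ω hω => by
      simp only [mem_filter, mem_univ, true_and] at hω ⊢
      obtain ⟨s, hs, hwin⟩ := exists_window_of_crossCount ω i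
      exact ⟨s, hs, (Nat.add_le_add_left (Nat.ceil_le.2 hω) s).trans hwin⟩
  have hmax := card_exists_hits_ge_le (ι := Fin m) (window_mono n (min i n))
    (fun s hs => card_window (min_le_right i n) hs) (δ := n / (2 * x)) (by positivity)
    (by rw [Fintype.card_fin, Fintype.card_fin, hm]; exact le_of_eq (by field_simp; ring))
    (Nat.one_le_ceil_iff.2 (mul_pos (by linarith) hx0) : 1 ≤ t)
  have hδ : (n : ℝ) / (2 * x) / n = 1 / (2 * x) := by field_simp
  rw [Fintype.card_fin, Fintype.card_fin, hδ] at hmax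
  refine (Nat.cast_le.2 (card_le_card hevent)).trans (hmax.trans ?_)
  gcongr
  refine one_sub_pow_le_two_rpow_neg (by rw [div_le_one (by positivity)]; linarith)
    (by positivity) ?_
  calc 1 / 2 * k = 1 / (2 * x) * (k * x) := by field_simp
    _ ≤ 1 / (2 * x) * t := by gcongr
end
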